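/- arXiv:2605.27818 — 8 statements merged into one kernel-verified Lean document; each statement's English description precedes it below -/
import Mathlib

section
/- Let h : ℝ → ℝ be a C³ function periodic of period L > 0. Then h satisfies (H1), (H2) and (H3) if and only if there exists an integer N ≥ 1 such that: (1) h has exactly 2N zeros a₁ < a₂ < ⋯ < a_{2N} in one period [0, L), all simple; (2) h has exactly 2N critical points in [0, L), interlaced with the zeros, i.e. exactly one critical point bⱼ in each open arc between consecutive zeros (cyclically), and at each such bⱼ one has h(bⱼ)·h''(bⱼ) < 0; (3) on each open arc between consecutive zeros, h has constant sign and |h| is concave. -/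
/-!
By (H3), `h''` has the sign opposite to that of `h`, so on an interval where `h` does not vanish
`h'` is monotone and `|h|` is concave; a monotone `h'` vanishing twice vanishes on a whole
interval, so with (H2) it vanishes at most once there. Simple zeros are isolated, hence finitely
many per period, and there is at least one: otherwise this would apply on all of `ℝ`, whereas
Rolle's theorem gives critical points `c` and `c + L`. Between consecutive zeros Rolle gives a
critical point; `h` changes sign at each simple zero and the signs repeat after a period, so the
number of zeros per period is even. Conversely, each point is congruent to a zero or to a point
of an arc, where concavity of `|h|` gives `h h'' ≤ 0`.
-/

/-- (H1): every zero of `h` is simple. -/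
def CondH1 (h : ℝ → ℝ) : Prop := ∀ a : ℝ, h a = 0 → deriv h a ≠ 0

/-- (H2): every critical point of `h` is nondegenerate. -/
def CondH2 (h : ℝ → ℝ) : Prop := ∀ b : ℝ, deriv h b = 0 → deriv (deriv h) b ≠ 0

/-- (H3): the convexity-type condition `h·h'' ≤ 0`. -/
def CondH3 (h : ℝ → ℝ) : Prop := ∀ x : ℝ, h x * deriv (deriv h) x ≤ 0

/-- The right endpoint of the (cyclic) open arc of the circle `ℝ/Lℤ`
determined by the consecutive zeros `a j` and `a (j+1)` (with the last arc
closing up periodically at `a 0 + L`). -/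
def arcEnd (L : ℝ) {m : ℕ} (a : Fin m → ℝ) (j : Fin m) : ℝ :=
  if hj : (j : ℕ) + 1 < m then a ⟨(j : ℕ) + 1, hj⟩
  else a ⟨0, Nat.lt_of_le_of_lt (Nat.zero_le _) j.isLt⟩ + L

open Set Filter Topology Function

theorem Function.Periodic.deriv {f : ℝ → ℝ} {c : ℝ} (hf : Periodic f c) :
    Periodic (deriv f) c := fun x => by
  rw [← deriv_comp_add_const, funext hf]

theorem IsPreconnected.pos_or_neg_of_ne_zero {X : Type*} [TopologicalSpace X] {s : Set X}
    {f : X → ℝ} (hs : IsPreconnected s) (hf : ContinuousOn f s) (hne : ∀ x ∈ s, f x ≠ 0) :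
    (∀ x ∈ s, 0 < f x) ∨ ∀ x ∈ s, f x < 0 := by
  by_contra! ⟨⟨x, hx, hfx⟩, ⟨y, hy, hfy⟩⟩
  obtain ⟨z, hz, hfz⟩ := hs.intermediate_value hx hy hf ⟨hfx, hfy⟩
  exact hne z hz hfz

theorem ne_zero_of_pos_or_neg {X : Type*} {s : Set X} {f : X → ℝ}
    (hsign : (∀ x ∈ s, 0 < f x) ∨ ∀ x ∈ s, f x < 0) {x : X} (hx : x ∈ s) : f x ≠ 0 :=
  hsign.elim (fun hpos => (hpos x hx).ne') fun hneg => (hneg x hx).ne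

theorem Set.Finite.exists_strictMono_fin {α : Type*} [LinearOrder α] {s : Set α}
    (hs : s.Finite) : ∃ m, ∃ a : Fin m → α, StrictMono a ∧ range a = s :=
  ⟨_, hs.toFinset.orderEmbOfFin rfl, OrderEmbedding.strictMono _, by simp⟩

theorem even_of_alternating {P : ℕ → Prop} {m : ℕ} (halt : ∀ i, P (i + 1) ↔ ¬ P i)
    (hper : P m ↔ P 0) : Even m := by
  have hparity : ∀ i, P i ↔ (P 0 ↔ Even i) := by
    intro i
    induction i with
    | zero => simp
    | succ i ih => rw [halt, ih, Nat.even_add_one]; tauto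
  have := hparity m
  tauto

theorem Function.Periodic.forall_Ioo_add_iff {α : Type*} {f : ℝ → α} {L : ℝ}
    (hf : Periodic f L) (p : α → Prop) (u v : ℝ) :
    (∀ x ∈ Ioo (u + L) (v + L), p (f x)) ↔ ∀ x ∈ Ioo u v, p (f x) := by
  rw [← image_add_const_Ioo, forall_mem_image]
  simp only [hf _]

theorem subsingleton_zeros_of_monotoneOn {g : ℝ → ℝ} {s : Set ℝ} (hs : s.OrdConnected)
    (hg : MonotoneOn g s) (hnd : ∀ b ∈ s, g b = 0 → deriv g b ≠ 0) :
    {b ∈ s | g b = 0}.Subsingleton := by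
  intro b₁ hb₁ b₂ hb₂
  by_contra hne
  wlog hlt : b₁ < b₂ generalizing b₁ b₂
  · exact this hb₂ hb₁ (Ne.symm hne) (lt_of_le_of_ne (not_lt.1 hlt) (Ne.symm hne))
  have hzero : ∀ t ∈ Icc b₁ b₂, g t = 0 := fun t ht => le_antisymm
    (hb₂.2 ▸ hg (hs.out hb₁.1 hb₂.1 ht) hb₂.1 ht.2)
    (hb₁.2 ▸ hg hb₁.1 (hs.out hb₁.1 hb₂.1 ht) ht.1)
  obtain ⟨t, ht⟩ := nonempty_Ioo.2 hlt
  have hlocal : g =ᶠ[𝓝 t] fun _ => 0 :=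
    eventually_of_mem (Ioo_mem_nhds ht.1 ht.2) fun x hx => hzero x (Ioo_subset_Icc_self hx)
  exact hnd t (hs.out hb₁.1 hb₂.1 (Ioo_subset_Icc_self ht)) (hzero t (Ioo_subset_Icc_self ht))
    (by rw [hlocal.deriv_eq, deriv_const])

theorem subsingleton_zeros_of_antitoneOn {g : ℝ → ℝ} {s : Set ℝ} (hs : s.OrdConnected)
    (hg : AntitoneOn g s) (hnd : ∀ b ∈ s, g b = 0 → deriv g b ≠ 0) :
    {b ∈ s | g b = 0}.Subsingleton := by
  have := subsingleton_zeros_of_monotoneOn hs hg.neg fun b hb hgb => by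
    simpa [deriv.neg] using hnd b hb (neg_eq_zero.1 hgb)
  simpa using this

section SecondDerivative

variable {h : ℝ → ℝ}

theorem deriv_deriv_nonpos_of_pos (H3 : CondH3 h) {x : ℝ} (hx : 0 < h x) :
    deriv (deriv h) x ≤ 0 :=
  nonpos_of_mul_nonpos_right (H3 x) hx

theorem deriv_deriv_nonneg_of_neg (H3 : CondH3 h) {x : ℝ} (hx : h x < 0) :
    0 ≤ deriv (deriv h) x :=
  nonneg_of_mul_nonpos_right (H3 x) hx

theorem antitoneOn_deriv_of_pos (hd2 : Differentiable ℝ (deriv h)) (H3 : CondH3 h)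
    {s : Set ℝ} (hs : Convex ℝ s) (hpos : ∀ x ∈ s, 0 < h x) : AntitoneOn (deriv h) s :=
  antitoneOn_of_deriv_nonpos hs hd2.continuous.continuousOn hd2.differentiableOn
    fun x hx => deriv_deriv_nonpos_of_pos H3 (hpos x (interior_subset hx))

theorem monotoneOn_deriv_of_neg (hd2 : Differentiable ℝ (deriv h)) (H3 : CondH3 h)
    {s : Set ℝ} (hs : Convex ℝ s) (hneg : ∀ x ∈ s, h x < 0) : MonotoneOn (deriv h) s :=
  monotoneOn_of_deriv_nonneg hs hd2.continuous.continuousOn hd2.differentiableOn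
    fun x hx => deriv_deriv_nonneg_of_neg H3 (hneg x (interior_subset hx))

theorem subsingleton_critical_of_pos_or_neg (hd2 : Differentiable ℝ (deriv h))
    (H2 : CondH2 h) (H3 : CondH3 h) {s : Set ℝ} (hs : Convex ℝ s)
    (hsign : (∀ x ∈ s, 0 < h x) ∨ ∀ x ∈ s, h x < 0) :
    {b ∈ s | deriv h b = 0}.Subsingleton := by
  rcases hsign with hpos | hneg
  · exact subsingleton_zeros_of_antitoneOn hs.ordConnected
      (antitoneOn_deriv_of_pos hd2 H3 hs hpos) fun b _ => H2 b
  · exact subsingleton_zeros_of_monotoneOn hs.ordConnected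
      (monotoneOn_deriv_of_neg hd2 H3 hs hneg) fun b _ => H2 b

theorem concaveOn_abs_of_pos_or_neg (hd1 : Differentiable ℝ h)
    (hd2 : Differentiable ℝ (deriv h)) (H3 : CondH3 h) {s : Set ℝ} (hs : Convex ℝ s)
    (hsign : (∀ x ∈ s, 0 < h x) ∨ ∀ x ∈ s, h x < 0) :
    ConcaveOn ℝ s fun x => |h x| := by
  rcases hsign with hpos | hneg
  · refine (concaveOn_of_deriv2_nonpos' hs hd1.differentiableOn hd2.differentiableOn
      fun x hx => deriv_deriv_nonpos_of_pos H3 (hpos x hx)).congr fun x hx => ?_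
    exact (abs_of_pos (hpos x hx)).symm
  · refine (convexOn_of_deriv2_nonneg' hs hd1.differentiableOn hd2.differentiableOn
      fun x hx => deriv_deriv_nonneg_of_neg H3 (hneg x hx)).neg.congr fun x hx => ?_
    exact (abs_of_neg (hneg x hx)).symm

theorem mul_deriv_deriv_nonpos_of_concaveOn_abs (hd1 : Differentiable ℝ h) {s : Set ℝ}
    (hs : IsOpen s) (hsign : (∀ x ∈ s, 0 < h x) ∨ ∀ x ∈ s, h x < 0)
    (hconc : ConcaveOn ℝ s fun x => |h x|) {x : ℝ} (hx : x ∈ s) :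
    h x * deriv (deriv h) x ≤ 0 := by
  rcases hsign with hpos | hneg
  · have hanti : AntitoneOn (deriv h) s :=
      (hconc.congr fun y hy => abs_of_pos (hpos y hy)).antitoneOn_deriv fun y _ => hd1 y
    refine mul_nonpos_of_nonneg_of_nonpos (hpos x hx).le ?_
    rw [← derivWithin_of_isOpen hs hx]
    exact hanti.derivWithin_nonpos
  · have hmono : MonotoneOn (deriv h) s := by
      have hconv : ConvexOn ℝ s h :=
        (hconc.congr fun y hy => abs_of_neg (hneg y hy)).neg.congr fun y _ => neg_neg (h y)
      exact hconv.monotoneOn_deriv fun y _ => hd1 y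
    refine mul_nonpos_of_nonpos_of_nonneg (hneg x hx).le ?_
    rw [← derivWithin_of_isOpen hs hx]
    exact hmono.derivWithin_nonneg

end SecondDerivative

section Zeros

variable {h : ℝ → ℝ}

theorem finite_zeros_of_condH1 (hd1 : Differentiable ℝ h) (H1 : CondH1 h) {K : Set ℝ}
    (hK : IsCompact K) : {x ∈ K | h x = 0}.Finite := by
  refine (hK.inter_right (isClosed_eq hd1.continuous continuous_const)).finite ?_
  refine isDiscrete_iff_nhdsNE.2 fun x hx => inf_principal_eq_bot.2 ?_
  filter_upwards [(hd1 x).hasDerivAt.eventually_ne (c := 0) (H1 x hx.2)] with y hy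
  exact fun hyK => hy hyK.2

/-- A simple zero is not a local extremum, so `h` changes sign there. -/
theorem pos_right_iff_not_pos_left {u z v : ℝ} (hu : u < z) (hv : z < v) (hz : h z = 0)
    (hz' : deriv h z ≠ 0) (hleft : (∀ x ∈ Ioo u z, 0 < h x) ∨ ∀ x ∈ Ioo u z, h x < 0)
    (hright : (∀ x ∈ Ioo z v, 0 < h x) ∨ ∀ x ∈ Ioo z v, h x < 0) :
    (∀ x ∈ Ioo z v, 0 < h x) ↔ ¬ ∀ x ∈ Ioo u z, 0 < h x := by
  have hnhds : Ioo u v ∈ 𝓝 z := Ioo_mem_nhds hu hv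
  constructor
  · intro hr hl
    refine hz' (IsLocalMin.deriv_eq_zero ?_)
    filter_upwards [hnhds] with x hx
    rcases lt_trichotomy x z with hxz | rfl | hzx
    · exact hz ▸ (hl x ⟨hx.1, hxz⟩).le
    · exact le_rfl
    · exact hz ▸ (hr x ⟨hzx, hx.2⟩).le
  · intro hl
    refine hright.resolve_right fun hr => hz' (IsLocalMax.deriv_eq_zero ?_)
    have hl' := hleft.resolve_left hl
    filter_upwards [hnhds] with x hx
    rcases lt_trichotomy x z with hxz | rfl | hzx
    · exact hz ▸ (hl' x ⟨hx.1, hxz⟩).le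
    · exact le_rfl
    · exact hz ▸ (hr x ⟨hzx, hx.2⟩).le

theorem exists_zero_of_periodic {L : ℝ} (hL : 0 < L) (hper : Periodic h L)
    (hd1 : Differentiable ℝ h) (hd2 : Differentiable ℝ (deriv h)) (H2 : CondH2 h)
    (H3 : CondH3 h) : ∃ x, h x = 0 := by
  by_contra! hne
  have hsign := isPreconnected_univ.pos_or_neg_of_ne_zero hd1.continuous.continuousOn
    fun x _ => hne x
  obtain ⟨c, -, hc⟩ :=
    exists_deriv_eq_zero hL hd1.continuous.continuousOn (by simpa using (hper 0).symm)
  have := subsingleton_critical_of_pos_or_neg hd2 H2 H3 convex_univ hsign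
    ⟨mem_univ c, hc⟩ ⟨mem_univ (c + L), hper.deriv c ▸ hc⟩
  linarith

theorem existsUnique_critical_of_zeros (hd1 : Differentiable ℝ h)
    (hd2 : Differentiable ℝ (deriv h)) (H2 : CondH2 h) (H3 : CondH3 h) {u v : ℝ} (huv : u < v)
    (hu : h u = 0) (hv : h v = 0)
    (hsign : (∀ x ∈ Ioo u v, 0 < h x) ∨ ∀ x ∈ Ioo u v, h x < 0) :
    ∃! b, b ∈ Ioo u v ∧ deriv h b = 0 := by
  obtain ⟨b, hb, hb'⟩ := exists_deriv_eq_zero huv hd1.continuous.continuousOn (hu.trans hv.symm)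
  exact ⟨b, ⟨hb, hb'⟩, fun b' hb'' =>
    subsingleton_critical_of_pos_or_neg hd2 H2 H3 (convex_Ioo u v) hsign hb'' ⟨hb, hb'⟩⟩

end Zeros

section CyclicSequence

variable {L : ℝ} {m : ℕ} [NeZero m] {a : Fin m → ℝ}

/-- The points `a 0, …, a (m-1)` of one period, continued `L`-periodically to the right. -/
def cyclicSeq (L : ℝ) (a : Fin m → ℝ) (i : ℕ) : ℝ := a (Fin.ofNat m i) + (i / m : ℕ) * L

theorem cyclicSeq_add_mul (i q : ℕ) : cyclicSeq L a (i + m * q) = cyclicSeq L a i + q * L := by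
  have hm : 0 < m := Nat.pos_of_neZero m
  have hidx : Fin.ofNat m (i + m * q) = Fin.ofNat m i := Fin.ext (by simp)
  rw [cyclicSeq, cyclicSeq, hidx, Nat.add_mul_div_left i q hm]
  push_cast
  ring

theorem cyclicSeq_add (i : ℕ) : cyclicSeq L a (i + m) = cyclicSeq L a i + L := by
  simpa using cyclicSeq_add_mul (L := L) (a := a) i 1

theorem cyclicSeq_of_lt {i : ℕ} (hi : i < m) : cyclicSeq L a i = a ⟨i, hi⟩ := by
  have hidx : Fin.ofNat m i = ⟨i, hi⟩ := Fin.ext (Nat.mod_eq_of_lt hi)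
  rw [cyclicSeq, hidx, Nat.div_eq_of_lt hi, Nat.cast_zero, zero_mul, add_zero]

theorem cyclicSeq_val (j : Fin m) : cyclicSeq L a j = a j := cyclicSeq_of_lt j.isLt

theorem arcEnd_eq_cyclicSeq (j : Fin m) : arcEnd L a j = cyclicSeq L a (j + 1) := by
  unfold arcEnd
  split_ifs with hj
  · rw [cyclicSeq_of_lt]
  · rw [show (j : ℕ) + 1 = 0 + m by omega, cyclicSeq_add, cyclicSeq_of_lt]

theorem strictMono_cyclicSeq (ha : StrictMono a) (hspan : ∀ i j, a i < a j + L) :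
    StrictMono (cyclicSeq L a) := by
  have hstep : ∀ r < m, cyclicSeq L a r < cyclicSeq L a (r + 1) := by
    intro r hr
    rcases Nat.lt_or_ge (r + 1) m with hr' | hr'
    · rw [cyclicSeq_of_lt hr, cyclicSeq_of_lt hr']
      exact ha (Fin.mk_lt_mk.2 (lt_add_one r))
    · rw [show r + 1 = 0 + m by omega, cyclicSeq_add, cyclicSeq_of_lt hr,
        cyclicSeq_of_lt (Nat.pos_of_neZero m)]
      exact hspan _ _
  refine strictMono_nat_of_lt_succ fun i => ?_
  rw [← Nat.mod_add_div i m, add_right_comm, cyclicSeq_add_mul, cyclicSeq_add_mul]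
  linarith [hstep (i % m) (Nat.mod_lt i (Nat.pos_of_neZero m))]

theorem exists_eq_or_mem_Ioo_arcEnd {y : ℝ}
    (hy : y ∈ Ico (cyclicSeq L a 0) (cyclicSeq L a 0 + L)) :
    ∃ j, y = a j ∨ y ∈ Ioo (a j) (arcEnd L a j) := by
  classical
  set i := Nat.findGreatest (fun i => cyclicSeq L a i ≤ y) m
  have hci : cyclicSeq L a i ≤ y :=
    Nat.findGreatest_spec (P := fun i => cyclicSeq L a i ≤ y) (Nat.zero_le m) hy.1
  have him : i < m := by
    refine lt_of_le_of_ne (Nat.findGreatest_le m) fun him => ?_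
    rw [him, show cyclicSeq L a m = cyclicSeq L a 0 + L by
      simpa using cyclicSeq_add (L := L) (a := a) 0] at hci
    exact hci.not_gt hy.2
  have hyi : y < cyclicSeq L a (i + 1) :=
    not_le.1 (Nat.findGreatest_is_greatest (lt_add_one i) him)
  refine ⟨⟨i, him⟩, ?_⟩
  rw [arcEnd_eq_cyclicSeq, ← cyclicSeq_val (L := L) (a := a) ⟨i, him⟩]
  rcases hci.eq_or_lt with heq | hlt
  · exact Or.inl heq.symm
  · exact Or.inr ⟨hlt, hyi⟩

end CyclicSequence

section Arcs

variable {L : ℝ} {h : ℝ → ℝ}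

theorem exists_cyclicSeq_eq_of_zero {m : ℕ} [NeZero m] {a : Fin m → ℝ} (hL : 0 < L)
    (hper : Periodic h L) (hzeros : {x ∈ Ico 0 L | h x = 0} = range a) {x : ℝ} (hx : 0 ≤ x)
    (hx0 : h x = 0) : ∃ i, cyclicSeq L a i = x := by
  set q := ⌊x / L⌋₊
  have hqx : q * L ≤ x := (le_div_iff₀ hL).1 (Nat.floor_le (div_nonneg hx hL.le))
  have hxq : x < (q + 1) * L := (div_lt_iff₀ hL).1 (Nat.lt_floor_add_one (x / L))
  have hwin : x - q * L ∈ {x ∈ Ico 0 L | h x = 0} :=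
    ⟨⟨by linarith, by linarith⟩, (hper.sub_nat_mul_eq q).trans hx0⟩
  obtain ⟨j, hj⟩ := hzeros ▸ hwin
  refine ⟨j + m * q, ?_⟩
  rw [cyclicSeq_add_mul, cyclicSeq_of_lt j.isLt, hj]
  ring

theorem ne_zero_of_mem_Ioo_cyclicSeq {m : ℕ} [NeZero m] {a : Fin m → ℝ} (hL : 0 < L)
    (hper : Periodic h L) (hc : StrictMono (cyclicSeq L a))
    (hzeros : {x ∈ Ico 0 L | h x = 0} = range a) {i : ℕ} {x : ℝ}
    (hx : x ∈ Ioo (cyclicSeq L a i) (cyclicSeq L a (i + 1))) : h x ≠ 0 := by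
  have hx0 : 0 ≤ x := by
    have := hc.monotone (Nat.zero_le i)
    rw [cyclicSeq_of_lt (Nat.pos_of_neZero m)] at this
    linarith [hx.1, (hzeros.ge (mem_range_self ⟨0, Nat.pos_of_neZero m⟩)).1.1]
  intro hzero
  obtain ⟨k, rfl⟩ := exists_cyclicSeq_eq_of_zero hL hper hzeros hx0 hzero
  have := hc.lt_iff_lt.1 hx.1
  have := hc.lt_iff_lt.1 hx.2
  omega

end Arcs

section Characterization

variable {L : ℝ} {h : ℝ → ℝ}

theorem even_card_zeros {m : ℕ} [NeZero m] {a : Fin m → ℝ} (hL : 0 < L) (hper : Periodic h L)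
    (hd1 : Differentiable ℝ h) (H1 : CondH1 h) (ha : StrictMono a)
    (hzeros : {x ∈ Ico 0 L | h x = 0} = range a) : Even m := by
  have hmem : ∀ j, a j ∈ {x ∈ Ico 0 L | h x = 0} := fun j => hzeros.ge (mem_range_self j)
  have hc := strictMono_cyclicSeq ha fun i j => by linarith [(hmem i).1.2, (hmem j).1.1]
  set c := cyclicSeq L a
  have hzero (i : ℕ) : h (c i) = 0 := (hper.nat_mul _ _).trans (hmem _).2
  have hsign (i : ℕ) :
      (∀ x ∈ Ioo (c i) (c (i + 1)), 0 < h x) ∨ ∀ x ∈ Ioo (c i) (c (i + 1)), h x < 0 :=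
    isPreconnected_Ioo.pos_or_neg_of_ne_zero hd1.continuous.continuousOn fun _ hx =>
      ne_zero_of_mem_Ioo_cyclicSeq hL hper hc hzeros hx
  refine even_of_alternating (P := fun i => ∀ x ∈ Ioo (c i) (c (i + 1)), 0 < h x)
    (fun i => pos_right_iff_not_pos_left (hc (lt_add_one i)) (hc (lt_add_one (i + 1)))
      (hzero _) (H1 _ (hzero _)) (hsign i) (hsign (i + 1))) ?_
  have hm : c m = c 0 + L := by simpa using cyclicSeq_add (L := L) (a := a) 0
  have hm1 : c (m + 1) = c 1 + L := by rw [add_comm]; exact cyclicSeq_add 1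
  simp only [hm, hm1, hper.forall_Ioo_add_iff (fun y => 0 < y), zero_add]

theorem exists_arcs_of_condH (hL : 0 < L) (hper : Periodic h L) (hd1 : Differentiable ℝ h)
    (hd2 : Differentiable ℝ (deriv h)) (H1 : CondH1 h) (H2 : CondH2 h) (H3 : CondH3 h) :
    ∃ N : ℕ, 1 ≤ N ∧ ∃ a : Fin (2 * N) → ℝ,
      StrictMono a ∧ (∀ j, a j ∈ Set.Ico (0 : ℝ) L) ∧
      ({x ∈ Set.Ico (0 : ℝ) L | h x = 0} = Set.range a) ∧
      (∀ j, deriv h (a j) ≠ 0) ∧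
      (∀ j : Fin (2 * N),
        (∃! b : ℝ, b ∈ Set.Ioo (a j) (arcEnd L a j) ∧ deriv h b = 0) ∧
        (∀ b ∈ Set.Ioo (a j) (arcEnd L a j), deriv h b = 0 →
          h b * deriv (deriv h) b < 0)) ∧
      (∀ j : Fin (2 * N),
        ((∀ x ∈ Set.Ioo (a j) (arcEnd L a j), 0 < h x) ∨
          (∀ x ∈ Set.Ioo (a j) (arcEnd L a j), h x < 0)) ∧
        ConcaveOn ℝ (Set.Ioo (a j) (arcEnd L a j)) (fun x => |h x|)) := by
  have hfin : {x ∈ Ico 0 L | h x = 0}.Finite := (finite_zeros_of_condH1 hd1 H1 isCompact_Icc).subset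
    fun x hx => ⟨Ico_subset_Icc_self hx.1, hx.2⟩
  obtain ⟨m, a, ha, hrange⟩ := hfin.exists_strictMono_fin
  have hzeros := hrange.symm
  have hmem : ∀ j, a j ∈ {x ∈ Ico 0 L | h x = 0} := fun j => hzeros.ge (mem_range_self j)
  have : NeZero m := by
    obtain ⟨x, hx⟩ := exists_zero_of_periodic hL hper hd1 hd2 H2 H3
    obtain ⟨y, hy, hxy⟩ := hper.exists_mem_Ico₀ hL x
    obtain ⟨j, -⟩ : y ∈ range a := hzeros ▸ ⟨hy, hxy ▸ hx⟩
    exact ⟨j.pos.ne'⟩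
  obtain ⟨N, rfl⟩ := (even_card_zeros hL hper hd1 H1 ha hzeros).two_dvd
  have hc := strictMono_cyclicSeq ha fun i j => by linarith [(hmem i).1.2, (hmem j).1.1]
  have hlt (j : Fin (2 * N)) : a j < arcEnd L a j := by
    simpa only [arcEnd_eq_cyclicSeq, cyclicSeq_val] using hc (lt_add_one (j : ℕ))
  have hsign (j : Fin (2 * N)) :
      (∀ x ∈ Ioo (a j) (arcEnd L a j), 0 < h x) ∨ ∀ x ∈ Ioo (a j) (arcEnd L a j), h x < 0 :=
    isPreconnected_Ioo.pos_or_neg_of_ne_zero hd1.continuous.continuousOn fun x hx =>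
      ne_zero_of_mem_Ioo_cyclicSeq hL hper hc hzeros (i := j) <| by
        simpa only [arcEnd_eq_cyclicSeq, cyclicSeq_val] using hx
  have hzero (j : Fin (2 * N)) : h (arcEnd L a j) = 0 := by
    unfold arcEnd
    split_ifs
    · exact (hmem _).2
    · rw [hper]; exact (hmem _).2
  refine ⟨N, by have := NeZero.ne (2 * N); omega, a, ha, fun j => (hmem j).1, hzeros,
    fun j => H1 _ (hmem j).2, fun j => ⟨?_, fun b hb hb0 => ?_⟩, fun j => ⟨hsign j, ?_⟩⟩
  · exact existsUnique_critical_of_zeros hd1 hd2 H2 H3 (hlt j) (hmem j).2 (hzero j) (hsign j)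
  · exact (H3 b).lt_of_ne (mul_ne_zero (ne_zero_of_pos_or_neg (hsign j) hb) (H2 b hb0))
  · exact concaveOn_abs_of_pos_or_neg hd1 hd2 H3 (convex_Ioo _ _) (hsign j)

theorem condH_of_forall_mem_Ico (hL : 0 < L) (hper : Periodic h L) (t : ℝ)
    (hwin : ∀ y ∈ Ico t (t + L), (h y = 0 → deriv h y ≠ 0) ∧
      (deriv h y = 0 → deriv (deriv h) y ≠ 0) ∧ h y * deriv (deriv h) y ≤ 0) :
    CondH1 h ∧ CondH2 h ∧ CondH3 h := by
  have hjet : Periodic (fun x => (h x, deriv h x, deriv (deriv h) x)) L := fun x => by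
    simp only [hper x, hper.deriv x, hper.deriv.deriv x]
  have hall (x : ℝ) : (h x = 0 → deriv h x ≠ 0) ∧ (deriv h x = 0 → deriv (deriv h) x ≠ 0) ∧
      h x * deriv (deriv h) x ≤ 0 := by
    obtain ⟨y, hy, hxy⟩ := hjet.exists_mem_Ico hL x t
    simp only [Prod.mk.injEq] at hxy
    rw [hxy.1, hxy.2.1, hxy.2.2]
    exact hwin y hy
  exact ⟨fun x => (hall x).1, fun x => (hall x).2.1, fun x => (hall x).2.2⟩

theorem condH_of_arcs (hL : 0 < L) (hper : Periodic h L) (hd1 : Differentiable ℝ h) {m : ℕ}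
    [NeZero m] {a : Fin m → ℝ} (hzero : ∀ j, h (a j) = 0) (hsimple : ∀ j, deriv h (a j) ≠ 0)
    (hcrit : ∀ j, ∀ b ∈ Ioo (a j) (arcEnd L a j), deriv h b = 0 →
      h b * deriv (deriv h) b < 0)
    (harc : ∀ j, ((∀ x ∈ Ioo (a j) (arcEnd L a j), 0 < h x) ∨
        ∀ x ∈ Ioo (a j) (arcEnd L a j), h x < 0) ∧
      ConcaveOn ℝ (Ioo (a j) (arcEnd L a j)) fun x => |h x|) :
    CondH1 h ∧ CondH2 h ∧ CondH3 h := by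
  refine condH_of_forall_mem_Ico hL hper (cyclicSeq L a 0) fun y hy => ?_
  obtain ⟨j, rfl | hyj⟩ := exists_eq_or_mem_Ioo_arcEnd hy
  · exact ⟨fun _ => hsimple j, fun h0 => absurd h0 (hsimple j), by rw [hzero j, zero_mul]⟩
  · have hne := ne_zero_of_pos_or_neg (harc j).1 hyj
    exact ⟨fun h0 => absurd h0 hne,
      fun hy0 hy2 => (hcrit j y hyj hy0).ne (by rw [hy2, mul_zero]),
      mul_deriv_deriv_nonpos_of_concaveOn_abs hd1 isOpen_Ioo (harc j).1 (harc j).2 hyj⟩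

end Characterization

/-- Geometric characterization of the conditions (H1), (H2), (H3) for a periodic
`C³` function `h`: they hold if and only if there is an integer `N ≥ 1` such that
(1) `h` has exactly `2N` zeros in one period, all simple;
(2) `h` has exactly one critical point in each (cyclic) open arc between
consecutive zeros, at which `h·h'' < 0`;
(3) on each such arc `h` has constant sign and `|h|` is concave. -/
theorem geometric_characterization_H1_H2_H3
    (L : ℝ) (hL : 0 < L)
    (h : ℝ → ℝ) (hreg : ContDiff ℝ 3 h) (hper : Function.Periodic h L) :
    (CondH1 h ∧ CondH2 h ∧ CondH3 h) ↔
      ∃ N : ℕ, 1 ≤ N ∧ ∃ a : Fin (2 * N) → ℝ,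
        StrictMono a ∧ (∀ j, a j ∈ Set.Ico (0 : ℝ) L) ∧
        -- (1) the zeros of `h` in one period are exactly `a 0 < ⋯ < a (2N-1)`,
        -- and they are all simple
        ({x ∈ Set.Ico (0 : ℝ) L | h x = 0} = Set.range a) ∧
        (∀ j, deriv h (a j) ≠ 0) ∧
        -- (2) exactly one critical point in each cyclic open arc between
        -- consecutive zeros, with `h·h'' < 0` there
        (∀ j : Fin (2 * N),
          (∃! b : ℝ, b ∈ Set.Ioo (a j) (arcEnd L a j) ∧ deriv h b = 0) ∧
          (∀ b ∈ Set.Ioo (a j) (arcEnd L a j), deriv h b = 0 →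
            h b * deriv (deriv h) b < 0)) ∧
        -- (3) on each cyclic open arc, `h` has constant sign and `|h|` is concave
        (∀ j : Fin (2 * N),
          ((∀ x ∈ Set.Ioo (a j) (arcEnd L a j), 0 < h x) ∨
            (∀ x ∈ Set.Ioo (a j) (arcEnd L a j), h x < 0)) ∧
          ConcaveOn ℝ (Set.Ioo (a j) (arcEnd L a j)) (fun x => |h x|)) := by
  have hd1 : Differentiable ℝ h := hreg.differentiable (by norm_num)
  have hd2 : Differentiable ℝ (deriv h) := (hreg.deriv' (n := 2)).differentiable (by norm_num)
  refine ⟨fun ⟨H1, H2, H3⟩ => exists_arcs_of_condH hL hper hd1 hd2 H1 H2 H3, ?_⟩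
  rintro ⟨N, hN, a, -, -, hzeros, hsimple, hcrit, harc⟩
  have : NeZero (2 * N) := ⟨by omega⟩
  exact condH_of_arcs hL hper hd1 (fun j => (hzeros.ge (mem_range_self j)).2) hsimple
    (fun j => (hcrit j).2) harc
end

section
/- Let h : ℝ → ℝ be a C³ function periodic of period L > 0 satisfying (H1), (H2) and (H3), and let a < b be two consecutive zeros of h (i.e. h(a) = h(b) = 0 and h(x) ≠ 0 for all x ∈ (a, b)). Then the set {x ∈ (a, b) : h'(x) = 0} consists of exactly one point. In particular, for H(x₁, x₂) = h₁(x₁)h₂(x₂) with h₁, h₂ satisfying (H1)–(H3), every cell (product of two open arcs between consecutive zeros of h₁ and of h₂) contains exactly one center of H. -/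
open Set

lemma key_lemma (h : ℝ → ℝ) (hreg : ContDiff ℝ 3 h)
    (hH2 : CondH2 h) (hH3 : CondH3 h)
    (a b : ℝ) (hab : a < b) (ha : h a = 0) (hb : h b = 0)
    (hcons : ∀ x ∈ Set.Ioo a b, h x ≠ 0) :
    ∃! x : ℝ, x ∈ Set.Ioo a b ∧ deriv h x = 0 := by
  have hdiff : Differentiable ℝ h := hreg.differentiable (by norm_num)
  have hreg' : ContDiff ℝ 2 (deriv h) := by
    exact (contDiff_succ_iff_deriv.mp (show ContDiff ℝ (2+1) h by norm_num [hreg])).2.2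
  have hdiff' : Differentiable ℝ (deriv h) := hreg'.differentiable (by norm_num)
  -- existence by Rolle
  obtain ⟨c, hc, hc0⟩ := exists_deriv_eq_zero (f := h) hab hdiff.continuous.continuousOn (ha.trans hb.symm)
  refine ⟨c, ⟨hc, hc0⟩, ?_⟩
  -- uniqueness
  -- constant sign on Ioo a b
  have hsign : (∀ t ∈ Ioo a b, 0 < h t) ∨ (∀ t ∈ Ioo a b, h t < 0) := by
    by_contra hcon
    push_neg at hcon
    obtain ⟨⟨u, hu, hu0⟩, ⟨v, hv, hv0⟩⟩ := hcon
    have hu0' : h u < 0 := lt_of_le_of_ne hu0 (hcons u hu)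
    have hv0' : 0 < h v := lt_of_le_of_ne hv0 (Ne.symm (hcons v hv))
    rcases le_total u v with huv | huv
    · obtain ⟨z, hz, hz0⟩ := intermediate_value_Icc huv hdiff.continuous.continuousOn
        (⟨hu0'.le, hv0'.le⟩ : (0:ℝ) ∈ Icc (h u) (h v))
      exact hcons z ⟨lt_of_lt_of_le hu.1 hz.1, lt_of_le_of_lt hz.2 hv.2⟩ hz0
    · obtain ⟨z, hz, hz0⟩ := intermediate_value_Icc' huv hdiff.continuous.continuousOn
        (⟨hu0'.le, hv0'.le⟩ : (0:ℝ) ∈ Icc (h u) (h v))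
      exact hcons z ⟨lt_of_lt_of_le hv.1 hz.1, lt_of_le_of_lt hz.2 hu.2⟩ hz0
  -- two critical points coincide
  have main : ∀ x y : ℝ, x ∈ Ioo a b → y ∈ Ioo a b → deriv h x = 0 → deriv h y = 0 →
      x < y → False := by
    intro x y hx hy hx0 hy0 hxy
    -- deriv h vanishes on Icc x y
    have hzero : ∀ t ∈ Icc x y, deriv h t = 0 := by
      have hsub : Icc x y ⊆ Ioo a b := fun t ht => ⟨lt_of_lt_of_le hx.1 ht.1, lt_of_le_of_lt ht.2 hy.2⟩
      rcases hsign with hpos | hneg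
      · have hmono : AntitoneOn (deriv h) (Icc x y) := by
          apply antitoneOn_of_deriv_nonpos (convex_Icc x y) hdiff'.continuous.continuousOn
            (hdiff'.differentiableOn)
          intro t ht
          rw [interior_Icc] at ht
          have h1 := hH3 t
          have h2 := hpos t (hsub (Ioo_subset_Icc_self ht))
          nlinarith
        intro t ht
        have h1 := hmono ⟨le_refl x, (le_of_lt hxy)⟩ ht ht.1
        have h2 := hmono ht ⟨le_of_lt hxy, le_refl y⟩ ht.2
        rw [hx0] at h1; rw [hy0] at h2
        linarith
      · have hmono : MonotoneOn (deriv h) (Icc x y) := by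
          apply monotoneOn_of_deriv_nonneg (convex_Icc x y) hdiff'.continuous.continuousOn
            (hdiff'.differentiableOn)
          intro t ht
          rw [interior_Icc] at ht
          have h1 := hH3 t
          have h2 := hneg t (hsub (Ioo_subset_Icc_self ht))
          nlinarith
        intro t ht
        have h1 := hmono ⟨le_refl x, (le_of_lt hxy)⟩ ht ht.1
        have h2 := hmono ht ⟨le_of_lt hxy, le_refl y⟩ ht.2
        rw [hx0] at h1; rw [hy0] at h2
        linarith
    set m := (x + y) / 2 with hm
    have hmmem : m ∈ Ioo x y := ⟨by simp [hm]; linarith, by simp [hm]; linarith⟩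
    have hev : deriv h =ᶠ[nhds m] (fun _ => (0:ℝ)) := by
      filter_upwards [Ioo_mem_nhds hmmem.1 hmmem.2] with t ht
      exact hzero t (Ioo_subset_Icc_self ht)
    have : deriv (deriv h) m = 0 := by
      rw [hev.deriv_eq]; simp
    exact hH2 m (hzero m (Ioo_subset_Icc_self hmmem)) this
  rintro y ⟨hy, hy0⟩
  rcases lt_trichotomy y c with h' | h' | h'
  · exact absurd (main y c hy hc hy0 hc0 h') (fun f => f.elim)
  · exact h'
  · exact absurd (main c y hc hy hc0 hy0 h') (fun f => f.elim)


/-- Between two consecutive zeros of a function satisfying (H1), (H2), (H3)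
there is exactly one critical point; in particular, every cell of the
factorized Hamiltonian `H(x₁,x₂) = h₁(x₁)h₂(x₂)` contains exactly one center. -/
theorem unique_critical_point_between_consecutive_zeros
    (L : ℝ) (hL : 0 < L)
    (h₁ h₂ : ℝ → ℝ)
    (hreg₁ : ContDiff ℝ 3 h₁) (hreg₂ : ContDiff ℝ 3 h₂)
    (hper₁ : Function.Periodic h₁ L) (hper₂ : Function.Periodic h₂ L)
    (hH1₁ : CondH1 h₁) (hH1₂ : CondH1 h₂)
    (hH2₁ : CondH2 h₁) (hH2₂ : CondH2 h₂)
    (hH3₁ : CondH3 h₁) (hH3₂ : CondH3 h₂)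
    (a₁ b₁ : ℝ) (hab₁ : a₁ < b₁)
    (ha₁ : h₁ a₁ = 0) (hb₁ : h₁ b₁ = 0)
    (hcons₁ : ∀ x ∈ Set.Ioo a₁ b₁, h₁ x ≠ 0)
    (a₂ b₂ : ℝ) (hab₂ : a₂ < b₂)
    (ha₂ : h₂ a₂ = 0) (hb₂ : h₂ b₂ = 0)
    (hcons₂ : ∀ x ∈ Set.Ioo a₂ b₂, h₂ x ≠ 0) :
    -- exactly one critical point of `h₁` in `(a₁, b₁)`
    (∃! x : ℝ, x ∈ Set.Ioo a₁ b₁ ∧ deriv h₁ x = 0) ∧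
    -- in particular, exactly one center of `H` in the cell `(a₁,b₁) × (a₂,b₂)`
    (∃! p : ℝ × ℝ, p ∈ Set.Ioo a₁ b₁ ×ˢ Set.Ioo a₂ b₂ ∧
      deriv h₁ p.1 = 0 ∧ deriv h₂ p.2 = 0) := by
  obtain ⟨c₁, hc₁, hu₁⟩ := key_lemma h₁ hreg₁ hH2₁ hH3₁ a₁ b₁ hab₁ ha₁ hb₁ hcons₁
  obtain ⟨c₂, hc₂, hu₂⟩ := key_lemma h₂ hreg₂ hH2₂ hH3₂ a₂ b₂ hab₂ ha₂ hb₂ hcons₂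
  refine ⟨⟨c₁, hc₁, hu₁⟩, ⟨(c₁, c₂), ⟨⟨hc₁.1, hc₂.1⟩, hc₁.2, hc₂.2⟩, ?_⟩⟩
  rintro ⟨p, q⟩ ⟨⟨hp, hq⟩, hp0, hq0⟩
  have e1 := hu₁ p ⟨hp, hp0⟩
  have e2 := hu₂ q ⟨hq, hq0⟩
  exact Prod.ext e1 e2
end

section
/- Assume the tangency and alignment conditions: σ(x) = ρ(x)ξ(x) with ρ(x) = r(H(x)) and λ(x) = l(H(x)). Then for every α > 0 and every x ∈ ℝ², the inertial drift g_α(x) = (α / (2(λ(x) + α))) · [ D(λ⁻¹σ)(x)·(λ⁻¹σ)(x) + (σ(x)σ(x)ᵀ)·∇λ(x)/λ(x)³ ] reduces to g_α(x) = β_α(x) · ν(x)² · Dξ(x)ξ(x), where β_α(x) = α/(2(λ(x)+α)) and ν(x) = r(H(x))/l(H(x)). -/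
noncomputable section

/-- The factorized Hamiltonian `H(x₁,x₂) = h₁(x₁)·h₂(x₂)`. -/
def Ham (h₁ h₂ : ℝ → ℝ) : ℝ × ℝ → ℝ := fun x => h₁ x.1 * h₂ x.2

/-- The Hamiltonian vector field `ξ = ∇⊥H = (−h₁h₂', h₁'h₂)`. -/
def xiField (h₁ h₂ : ℝ → ℝ) : ℝ × ℝ → ℝ × ℝ :=
  fun x => (-(h₁ x.1 * deriv h₂ x.2), deriv h₁ x.1 * h₂ x.2)

/-- Euclidean scalar product on `ℝ²`. -/
def dotR2 (a b : ℝ × ℝ) : ℝ := a.1 * b.1 + a.2 * b.2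

/-- The gradient of a scalar function on `ℝ²`. -/
def gradR2 (f : ℝ × ℝ → ℝ) (x : ℝ × ℝ) : ℝ × ℝ :=
  (fderiv ℝ f x (1, 0), fderiv ℝ f x (0, 1))

/-! Both correction terms of the drift are derivatives along `ξ` of functions of `H`:
`∇λ · σ` is `ρ (l' ∘ H) DH ξ`, and writing `λ⁻¹σ = ν ξ` the product rule gives
`D(νξ)(νξ) = ν² Dξ ξ + ν (Dν ξ) ξ`. Since `ξ = ∇⊥H` is tangent to the level sets of `H`,
`DH ξ = 0`, so both `∇λ · σ` and `Dν ξ` vanish. -/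

section Calculus

variable {𝕜 : Type*} [NontriviallyNormedField 𝕜]
  {E F G : Type*} [NormedAddCommGroup E] [NormedSpace 𝕜 E] [NormedAddCommGroup F]
  [NormedSpace 𝕜 F] [NormedAddCommGroup G] [NormedSpace 𝕜 G]

theorem fderiv_comp_apply_eq_zero {H : E → F} {φ : F → G} {x v : E}
    (hφ : DifferentiableAt 𝕜 φ (H x)) (hH : DifferentiableAt 𝕜 H x)
    (hv : fderiv 𝕜 H x v = 0) : fderiv 𝕜 (fun y => φ (H y)) x v = 0 := by
  rw [show (fun y => φ (H y)) = φ ∘ H from rfl, fderiv_comp x hφ hH]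
  simp [hv]

theorem fderiv_smul_apply_smul_self {ν : E → 𝕜} {ξ : E → E} {x : E}
    (hν : DifferentiableAt 𝕜 ν x) (hξ : DifferentiableAt 𝕜 ξ x)
    (hνξ : fderiv 𝕜 ν x (ξ x) = 0) :
    fderiv 𝕜 (fun y => ν y • ξ y) x (ν x • ξ x) = ν x ^ 2 • fderiv 𝕜 ξ x (ξ x) := by
  have D : HasFDerivAt (fun y => ν y • ξ y) _ x := hν.hasFDerivAt.smul hξ.hasFDerivAt
  rw [D.fderiv]
  simp [hνξ, smul_smul, sq]

end Calculus

theorem dotR2_gradR2 (f : ℝ × ℝ → ℝ) (x v : ℝ × ℝ) :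
    dotR2 v (gradR2 f x) = fderiv ℝ f x v := by
  have hv : v = v.1 • ((1 : ℝ), (0 : ℝ)) + v.2 • ((0 : ℝ), (1 : ℝ)) := by simp
  conv_rhs => rw [hv, map_add, map_smul, map_smul]
  simp [dotR2, gradR2]

section Hamiltonian

variable {h₁ h₂ : ℝ → ℝ}

theorem abs_ham_le_one (hbd₁ : ∀ x : ℝ, |h₁ x| ≤ 1) (hbd₂ : ∀ x : ℝ, |h₂ x| ≤ 1)
    (x : ℝ × ℝ) : |Ham h₁ h₂ x| ≤ 1 := by
  rw [Ham, abs_mul]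
  exact mul_le_one₀ (hbd₁ x.1) (abs_nonneg _) (hbd₂ x.2)

theorem Differentiable.ham (hd₁ : Differentiable ℝ h₁) (hd₂ : Differentiable ℝ h₂) :
    Differentiable ℝ (Ham h₁ h₂) := fun x =>
  ((hd₁ x.1).comp x differentiableAt_fst).mul ((hd₂ x.2).comp x differentiableAt_snd)

theorem ContDiff.differentiable_xiField (hreg₁ : ContDiff ℝ 2 h₁) (hreg₂ : ContDiff ℝ 2 h₂) :
    Differentiable ℝ (xiField h₁ h₂) := by
  have hd₁ := hreg₁.differentiable two_ne_zero
  have hd₂ := hreg₂.differentiable two_ne_zero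
  have hdd₁ := hreg₁.differentiable_deriv_two
  have hdd₂ := hreg₂.differentiable_deriv_two
  unfold xiField
  fun_prop

theorem fderiv_ham_apply_xiField (hd₁ : Differentiable ℝ h₁) (hd₂ : Differentiable ℝ h₂)
    (x : ℝ × ℝ) : fderiv ℝ (Ham h₁ h₂) x (xiField h₁ h₂ x) = 0 := by
  have D₁ : HasFDerivAt (fun p : ℝ × ℝ => h₁ p.1)
      (deriv h₁ x.1 • ContinuousLinearMap.fst ℝ ℝ ℝ) x :=
    (hd₁ x.1).hasDerivAt.comp_hasFDerivAt x hasFDerivAt_fst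
  have D₂ : HasFDerivAt (fun p : ℝ × ℝ => h₂ p.2)
      (deriv h₂ x.2 • ContinuousLinearMap.snd ℝ ℝ ℝ) x :=
    (hd₂ x.2).hasDerivAt.comp_hasFDerivAt x hasFDerivAt_snd
  have DH : HasFDerivAt (Ham h₁ h₂) _ x := D₁.mul D₂
  rw [DH.fderiv]
  simp [xiField]
  ring

end Hamiltonian

theorem inertial_drift_reduction_general
    (l₀ : ℝ) (hl₀ : 0 < l₀)
    (h₁ h₂ : ℝ → ℝ)
    (hreg₁ : ContDiff ℝ 3 h₁) (hreg₂ : ContDiff ℝ 3 h₂)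
    (hbd₁ : ∀ x : ℝ, |h₁ x| ≤ 1) (hbd₂ : ∀ x : ℝ, |h₂ x| ≤ 1)
    (l r : ℝ → ℝ) (hlreg : ContDiff ℝ 2 l) (hrreg : ContDiff ℝ 2 r)
    (hlb : ∀ s ∈ Set.Icc (-1 : ℝ) 1, l₀ ≤ l s)
    -- the aligned friction λ = l∘H and noise σ = ρ ξ with ρ = r∘H
    (lam : ℝ × ℝ → ℝ) (hlam : lam = fun x => l (Ham h₁ h₂ x))
    (sig : ℝ × ℝ → ℝ × ℝ) (hsig : sig = fun x => r (Ham h₁ h₂ x) • xiField h₁ h₂ x)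
    (nu : ℝ × ℝ → ℝ) (hnu : nu = fun x => r (Ham h₁ h₂ x) / l (Ham h₁ h₂ x)) :
    ∀ α : ℝ, 0 < α → ∀ x : ℝ × ℝ,
      (α / (2 * (lam x + α))) •
          (fderiv ℝ (fun y => (lam y)⁻¹ • sig y) x ((lam x)⁻¹ • sig x) +
            (dotR2 (sig x) (gradR2 lam x) / (lam x) ^ 3) • sig x) =
        ((α / (2 * (lam x + α))) * (nu x) ^ 2) •
          fderiv ℝ (xiField h₁ h₂) x (xiField h₁ h₂ x) := by
  intro α _ x
  subst hlam hsig hnu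
  have hreg₁' : ContDiff ℝ 2 h₁ := hreg₁.of_le (by norm_num)
  have hreg₂' : ContDiff ℝ 2 h₂ := hreg₂.of_le (by norm_num)
  have hd₁ := hreg₁'.differentiable two_ne_zero
  have hd₂ := hreg₂'.differentiable two_ne_zero
  have hld := hlreg.differentiable two_ne_zero
  have hrd := hrreg.differentiable two_ne_zero
  have hHd := hd₁.ham hd₂
  have hflow := fderiv_ham_apply_xiField hd₁ hd₂ x
  have hl : l (Ham h₁ h₂ x) ≠ 0 :=
    (hl₀.trans_le (hlb _ (abs_le.mp (abs_ham_le_one hbd₁ hbd₂ x)))).ne'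
  have hquot (y : ℝ × ℝ) : (l (Ham h₁ h₂ y))⁻¹ • r (Ham h₁ h₂ y) • xiField h₁ h₂ y =
      (r (Ham h₁ h₂ y) / l (Ham h₁ h₂ y)) • xiField h₁ h₂ y := by
    rw [smul_smul, inv_mul_eq_div]
  have hgrad : dotR2 (r (Ham h₁ h₂ x) • xiField h₁ h₂ x)
      (gradR2 (fun y => l (Ham h₁ h₂ y)) x) = 0 := by
    rw [dotR2_gradR2, map_smul, fderiv_comp_apply_eq_zero (hld _) (hHd x) hflow, smul_zero]
  have hdrift := fderiv_smul_apply_smul_self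
    (ν := fun y => r (Ham h₁ h₂ y) / l (Ham h₁ h₂ y))
    (((hrd _).div (hld _) hl).comp x (hHd x))
    (hreg₁'.differentiable_xiField hreg₂' x)
    (fderiv_comp_apply_eq_zero (φ := fun s => r s / l s) ((hrd _).div (hld _) hl) (hHd x) hflow)
  beta_reduce at hdrift ⊢
  simp only [hquot, hgrad, zero_div, zero_smul, add_zero]
  rw [hdrift, smul_smul]

/-- Under the tangency condition `σ = ρ ξ` and the alignment condition
`λ = l∘H`, `ρ = r∘H`, the inertial drift
`g_α = (α/(2(λ+α)))·[D(λ⁻¹σ)(λ⁻¹σ) + (σσᵀ)∇λ/λ³]`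
reduces to `g_α = β_α ν² Dξ ξ`, with `β_α = α/(2(λ+α))` and `ν = (r∘H)/(l∘H)`. -/
theorem inertial_drift_reduction
    (L l₀ r₀ : ℝ) (hL : 0 < L) (hl₀ : 0 < l₀) (hr₀ : 0 < r₀)
    (h₁ h₂ : ℝ → ℝ)
    (hreg₁ : ContDiff ℝ 3 h₁) (hreg₂ : ContDiff ℝ 3 h₂)
    (hper₁ : Function.Periodic h₁ L) (hper₂ : Function.Periodic h₂ L)
    (hbd₁ : ∀ x : ℝ, |h₁ x| ≤ 1) (hbd₂ : ∀ x : ℝ, |h₂ x| ≤ 1)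
    (hmax₁ : ∃ x : ℝ, |h₁ x| = 1) (hmax₂ : ∃ x : ℝ, |h₂ x| = 1)
    (l r : ℝ → ℝ) (hlreg : ContDiff ℝ 2 l) (hrreg : ContDiff ℝ 2 r)
    (hlb : ∀ s ∈ Set.Icc (-1 : ℝ) 1, l₀ ≤ l s)
    (hrb : ∀ s ∈ Set.Icc (-1 : ℝ) 1, r₀ ≤ (r s) ^ 2)
    -- the aligned friction λ = l∘H and noise σ = ρ ξ with ρ = r∘H
    (lam : ℝ × ℝ → ℝ) (hlam : lam = fun x => l (Ham h₁ h₂ x))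
    (sig : ℝ × ℝ → ℝ × ℝ) (hsig : sig = fun x => r (Ham h₁ h₂ x) • xiField h₁ h₂ x)
    (nu : ℝ × ℝ → ℝ) (hnu : nu = fun x => r (Ham h₁ h₂ x) / l (Ham h₁ h₂ x)) :
    ∀ α : ℝ, 0 < α → ∀ x : ℝ × ℝ,
      (α / (2 * (lam x + α))) •
          (fderiv ℝ (fun y => (lam y)⁻¹ • sig y) x ((lam x)⁻¹ • sig x) +
            (dotR2 (sig x) (gradR2 lam x) / (lam x) ^ 3) • sig x) =
        ((α / (2 * (lam x + α))) * (nu x) ^ 2) •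
          fderiv ℝ (xiField h₁ h₂) x (xiField h₁ h₂ x) :=
  inertial_drift_reduction_general l₀ hl₀ h₁ h₂ hreg₁ hreg₂ hbd₁ hbd₂ l r hlreg hrreg hlb lam hlam
    sig hsig nu hnu
end
end

section
/- For every x = (x₁, x₂) ∈ ℝ² the identity ∇H(x) · (Dξ(x)ξ(x)) = H(x) · Λ(x) holds, where Λ(x) = 2 h₁'(x₁)² h₂'(x₂)² − h₁'(x₁)² h₂(x₂)h₂''(x₂) − h₁(x₁)h₁''(x₁) h₂'(x₂)². -/
noncomputable section

/-- The function `Λ = 2(h₁')²(h₂')² − (h₁')²h₂h₂'' − h₁h₁''(h₂')²`. -/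
def LambdaFn (h₁ h₂ : ℝ → ℝ) : ℝ × ℝ → ℝ := fun x =>
  2 * (deriv h₁ x.1) ^ 2 * (deriv h₂ x.2) ^ 2 -
    (deriv h₁ x.1) ^ 2 * (h₂ x.2 * deriv (deriv h₂) x.2) -
    (h₁ x.1 * deriv (deriv h₁) x.1) * (deriv h₂ x.2) ^ 2

section SeparableProduct

variable {𝕜 : Type*} [NontriviallyNormedField 𝕜] {a b : 𝕜 → 𝕜} {x : 𝕜 × 𝕜}

theorem differentiableAt_separable_mul (ha : DifferentiableAt 𝕜 a x.1)
    (hb : DifferentiableAt 𝕜 b x.2) : DifferentiableAt 𝕜 (fun p : 𝕜 × 𝕜 => a p.1 * b p.2) x :=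
  (ha.comp x differentiableAt_fst).mul (hb.comp x differentiableAt_snd)

theorem fderiv_separable_mul_apply (ha : DifferentiableAt 𝕜 a x.1)
    (hb : DifferentiableAt 𝕜 b x.2) (v : 𝕜 × 𝕜) :
    fderiv 𝕜 (fun p : 𝕜 × 𝕜 => a p.1 * b p.2) x v =
      deriv a x.1 * v.1 * b x.2 + a x.1 * (deriv b x.2 * v.2) := by
  have hfst : HasFDerivAt (fun p : 𝕜 × 𝕜 => a p.1) _ x :=
    ha.hasDerivAt.hasFDerivAt.comp x hasFDerivAt_fst
  have hsnd : HasFDerivAt (fun p : 𝕜 × 𝕜 => b p.2) _ x :=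
    hb.hasDerivAt.hasFDerivAt.comp x hasFDerivAt_snd
  rw [(hfst.fun_mul hsnd).fderiv]
  simp only [add_apply, smul_apply,
    ContinuousLinearMap.comp_apply, ContinuousLinearMap.toSpanSingleton_apply,
    ContinuousLinearMap.coe_fst', ContinuousLinearMap.coe_snd', smul_eq_mul]
  ring

end SeparableProduct

/-- The fundamental algebraic identity `∇H · (Dξ ξ) = H Λ`. -/
theorem gradH_dot_acceleration
    (h₁ h₂ : ℝ → ℝ)
    (hreg₁ : ContDiff ℝ 3 h₁) (hreg₂ : ContDiff ℝ 3 h₂) :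
    ∀ x : ℝ × ℝ,
      dotR2 (gradR2 (Ham h₁ h₂) x) (fderiv ℝ (xiField h₁ h₂) x (xiField h₁ h₂ x)) =
        Ham h₁ h₂ x * LambdaFn h₁ h₂ x := by
  intro x
  have hd₁ : Differentiable ℝ h₁ := hreg₁.differentiable (by norm_num)
  have hd₂ : Differentiable ℝ h₂ := hreg₂.differentiable (by norm_num)
  have hd₁' : Differentiable ℝ (deriv h₁) := (hreg₁.of_le (by norm_num)).differentiable_deriv_two
  have hd₂' : Differentiable ℝ (deriv h₂) := (hreg₂.of_le (by norm_num)).differentiable_deriv_two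
  have hξ : ∀ v, fderiv ℝ (xiField h₁ h₂) x v =
      (-fderiv ℝ (fun p : ℝ × ℝ => h₁ p.1 * deriv h₂ p.2) x v,
        fderiv ℝ (fun p : ℝ × ℝ => deriv h₁ p.1 * h₂ p.2) x v) := fun v => by
    unfold xiField
    rw [DifferentiableAt.fderiv_prodMk
      (differentiableAt_separable_mul (hd₁ _) (hd₂' _)).fun_neg
      (differentiableAt_separable_mul (hd₁' _) (hd₂ _)), fderiv_fun_neg]
    rfl
  unfold Ham
  simp only [gradR2, dotR2, hξ, fderiv_separable_mul_apply (hd₁ _) (hd₂ _),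
    fderiv_separable_mul_apply (hd₁ _) (hd₂' _), fderiv_separable_mul_apply (hd₁' _) (hd₂ _),
    xiField, LambdaFn]
  ring
end
end

section
/- For every x = (x₁, x₂) ∈ ℝ² the identity div(Dξ ξ)(x) = 2·D_H(x) holds, where D_H(x) = h₁'(x₁)² h₂'(x₂)² − h₁(x₁)h₁''(x₁) h₂(x₂)h₂''(x₂); moreover D_H(x) = −det(Hess H(x)). -/
/-!
Both `ξ` and its acceleration `Dξ ξ` have components of the separable form `a(x₁) b(x₂)`
(after the cancellation in `Dξ ξ`), i.e. they are built from `Ham` itself. The derivative of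
`Ham a b` is read off factor by factor, so the divergence and the Hessian determinant reduce to
one-variable product rules followed by a ring identity.
-/

noncomputable section

/-- The divergence of a vector field on `ℝ²`. -/
def divR2 (V : ℝ × ℝ → ℝ × ℝ) (x : ℝ × ℝ) : ℝ :=
  (fderiv ℝ V x (1, 0)).1 + (fderiv ℝ V x (0, 1)).2

/-- The second derivative (Hessian bilinear form) of `f : ℝ × ℝ → ℝ` at `x`,
evaluated at the pair of directions `(u, v)`. -/
def Hess (f : ℝ × ℝ → ℝ) (x u v : ℝ × ℝ) : ℝ :=
  fderiv ℝ (fun y => fderiv ℝ f y u) x v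

/-- The determinant of the Hessian of `f` at `x`. -/
def detHess (f : ℝ × ℝ → ℝ) (x : ℝ × ℝ) : ℝ :=
  Hess f x (1, 0) (1, 0) * Hess f x (0, 1) (0, 1) -
    Hess f x (1, 0) (0, 1) * Hess f x (0, 1) (1, 0)

/-- The function `D_H = (h₁')²(h₂')² − h₁h₁''h₂h₂''`. -/
def DHFn (h₁ h₂ : ℝ → ℝ) : ℝ × ℝ → ℝ := fun x =>
  (deriv h₁ x.1) ^ 2 * (deriv h₂ x.2) ^ 2 -
    (h₁ x.1 * deriv (deriv h₁) x.1) * (h₂ x.2 * deriv (deriv h₂) x.2)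

theorem ContDiff.differentiable_deriv_deriv {𝕜 F : Type*} [NontriviallyNormedField 𝕜]
    [NormedAddCommGroup F] [NormedSpace 𝕜 F] {f : 𝕜 → F} (hf : ContDiff 𝕜 3 f) :
    Differentiable 𝕜 (deriv (deriv f)) := by
  fun_prop

section Separable

variable {g₁ g₂ : ℝ → ℝ} {x : ℝ × ℝ}

theorem hasFDerivAt_ham (hg₁ : DifferentiableAt ℝ g₁ x.1) (hg₂ : DifferentiableAt ℝ g₂ x.2) :
    HasFDerivAt (Ham g₁ g₂)
      (g₁ x.1 • deriv g₂ x.2 • ContinuousLinearMap.snd ℝ ℝ ℝ +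
        g₂ x.2 • deriv g₁ x.1 • ContinuousLinearMap.fst ℝ ℝ ℝ) x :=
  (hg₁.hasDerivAt.comp_hasFDerivAt x hasFDerivAt_fst).mul
    (hg₂.hasDerivAt.comp_hasFDerivAt x hasFDerivAt_snd)

theorem differentiableAt_ham (hg₁ : DifferentiableAt ℝ g₁ x.1)
    (hg₂ : DifferentiableAt ℝ g₂ x.2) : DifferentiableAt ℝ (Ham g₁ g₂) x :=
  (hasFDerivAt_ham hg₁ hg₂).differentiableAt

theorem fderiv_ham_apply (hg₁ : DifferentiableAt ℝ g₁ x.1) (hg₂ : DifferentiableAt ℝ g₂ x.2)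
    (u : ℝ × ℝ) :
    fderiv ℝ (Ham g₁ g₂) x u = deriv g₁ x.1 * g₂ x.2 * u.1 + g₁ x.1 * deriv g₂ x.2 * u.2 := by
  rw [(hasFDerivAt_ham hg₁ hg₂).fderiv]
  simp only [add_apply, smul_apply, ContinuousLinearMap.coe_fst', ContinuousLinearMap.coe_snd',
    smul_eq_mul]
  ring

theorem fderiv_ham_apply_fst (hg₁ : Differentiable ℝ g₁) (hg₂ : Differentiable ℝ g₂) :
    (fun y => fderiv ℝ (Ham g₁ g₂) y (1, 0)) = Ham (deriv g₁) g₂ := by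
  ext y
  simp [fderiv_ham_apply (hg₁ y.1) (hg₂ y.2), Ham]

theorem fderiv_ham_apply_snd (hg₁ : Differentiable ℝ g₁) (hg₂ : Differentiable ℝ g₂) :
    (fun y => fderiv ℝ (Ham g₁ g₂) y (0, 1)) = Ham g₁ (deriv g₂) := by
  ext y
  simp [fderiv_ham_apply (hg₁ y.1) (hg₂ y.2), Ham]

theorem detHess_ham (hg₁ : Differentiable ℝ g₁) (hg₂ : Differentiable ℝ g₂)
    (hg₁' : DifferentiableAt ℝ (deriv g₁) x.1) (hg₂' : DifferentiableAt ℝ (deriv g₂) x.2) :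
    detHess (Ham g₁ g₂) x =
      deriv (deriv g₁) x.1 * g₂ x.2 * (g₁ x.1 * deriv (deriv g₂) x.2) -
        (deriv g₁ x.1 * deriv g₂ x.2) ^ 2 := by
  simp only [detHess, Hess, fderiv_ham_apply_fst hg₁ hg₂, fderiv_ham_apply_snd hg₁ hg₂,
    fderiv_ham_apply hg₁' (hg₂ x.2), fderiv_ham_apply (hg₁ x.1) hg₂']
  ring

end Separable

theorem divR2_prodMk {f g : ℝ × ℝ → ℝ} {x : ℝ × ℝ} (hf : DifferentiableAt ℝ f x)
    (hg : DifferentiableAt ℝ g x) :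
    divR2 (fun y => (f y, g y)) x = fderiv ℝ f x (1, 0) + fderiv ℝ g x (0, 1) := by
  rw [divR2, hf.fderiv_prodMk hg]
  rfl

section Hamiltonian

variable {h₁ h₂ : ℝ → ℝ}

theorem xiField_eq_ham :
    xiField h₁ h₂ = fun y => (Ham (-h₁) (deriv h₂) y, Ham (deriv h₁) h₂ y) := by
  ext y <;> simp [xiField, Ham]

theorem fderiv_xiField_apply (hh₁ : Differentiable ℝ h₁) (hh₂ : Differentiable ℝ h₂)
    (hh₁' : Differentiable ℝ (deriv h₁)) (hh₂' : Differentiable ℝ (deriv h₂)) (y u : ℝ × ℝ) :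
    fderiv ℝ (xiField h₁ h₂) y u =
      (-(deriv h₁ y.1 * deriv h₂ y.2 * u.1 + h₁ y.1 * deriv (deriv h₂) y.2 * u.2),
        deriv (deriv h₁) y.1 * h₂ y.2 * u.1 + deriv h₁ y.1 * deriv h₂ y.2 * u.2) := by
  have hneg : DifferentiableAt ℝ (-h₁) y.1 := (hh₁ y.1).neg
  rw [xiField_eq_ham, (differentiableAt_ham hneg (hh₂' y.2)).fderiv_prodMk
    (differentiableAt_ham (hh₁' y.1) (hh₂ y.2)), ContinuousLinearMap.prod_apply,
    fderiv_ham_apply hneg (hh₂' y.2), fderiv_ham_apply (hh₁' y.1) (hh₂ y.2),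
    deriv.neg', Pi.neg_apply]
  ext <;> ring

theorem acceleration_eq_ham (hh₁ : Differentiable ℝ h₁) (hh₂ : Differentiable ℝ h₂)
    (hh₁' : Differentiable ℝ (deriv h₁)) (hh₂' : Differentiable ℝ (deriv h₂)) :
    (fun y => fderiv ℝ (xiField h₁ h₂) y (xiField h₁ h₂ y)) = fun y =>
      (Ham (h₁ * deriv h₁) (deriv h₂ ^ 2 - h₂ * deriv (deriv h₂)) y,
        Ham (deriv h₁ ^ 2 - h₁ * deriv (deriv h₁)) (h₂ * deriv h₂) y) := by
  ext y <;> simp only [fderiv_xiField_apply hh₁ hh₂ hh₁' hh₂', xiField, Ham, Pi.mul_apply,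
    Pi.sub_apply, Pi.pow_apply] <;> ring

theorem divR2_acceleration (hh₁ : Differentiable ℝ h₁) (hh₂ : Differentiable ℝ h₂)
    (hh₁' : Differentiable ℝ (deriv h₁)) (hh₂' : Differentiable ℝ (deriv h₂))
    (hh₁'' : Differentiable ℝ (deriv (deriv h₁))) (hh₂'' : Differentiable ℝ (deriv (deriv h₂)))
    (x : ℝ × ℝ) :
    divR2 (fun y => fderiv ℝ (xiField h₁ h₂) y (xiField h₁ h₂ y)) x = 2 * DHFn h₁ h₂ x := by
  have ha₁ : Differentiable ℝ (h₁ * deriv h₁) := hh₁.mul hh₁'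
  have hb₁ : Differentiable ℝ (deriv h₂ ^ 2 - h₂ * deriv (deriv h₂)) :=
    (hh₂'.pow 2).sub (hh₂.mul hh₂'')
  have ha₂ : Differentiable ℝ (deriv h₁ ^ 2 - h₁ * deriv (deriv h₁)) :=
    (hh₁'.pow 2).sub (hh₁.mul hh₁'')
  have hb₂ : Differentiable ℝ (h₂ * deriv h₂) := hh₂.mul hh₂'
  rw [acceleration_eq_ham hh₁ hh₂ hh₁' hh₂',
    divR2_prodMk (differentiableAt_ham (ha₁ _) (hb₁ _)) (differentiableAt_ham (ha₂ _) (hb₂ _)),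
    fderiv_ham_apply (ha₁ _) (hb₁ _), fderiv_ham_apply (ha₂ _) (hb₂ _),
    deriv_mul (hh₁ _) (hh₁' _), deriv_mul (hh₂ _) (hh₂' _)]
  simp only [DHFn, Pi.mul_apply, Pi.sub_apply, Pi.pow_apply]
  ring

theorem DHFn_eq_neg_detHess (hh₁ : Differentiable ℝ h₁) (hh₂ : Differentiable ℝ h₂)
    {x : ℝ × ℝ} (hh₁' : DifferentiableAt ℝ (deriv h₁) x.1)
    (hh₂' : DifferentiableAt ℝ (deriv h₂) x.2) :
    DHFn h₁ h₂ x = -detHess (Ham h₁ h₂) x := by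
  rw [detHess_ham hh₁ hh₂ hh₁' hh₂', DHFn]
  ring

end Hamiltonian

/-- The identity `div(Dξ ξ) = 2 D_H`, together with `D_H = −det Hess H`. -/
theorem div_acceleration_eq_two_DH
    (h₁ h₂ : ℝ → ℝ)
    (hreg₁ : ContDiff ℝ 3 h₁) (hreg₂ : ContDiff ℝ 3 h₂) :
    ∀ x : ℝ × ℝ,
      divR2 (fun y => fderiv ℝ (xiField h₁ h₂) y (xiField h₁ h₂ y)) x =
        2 * DHFn h₁ h₂ x ∧
      DHFn h₁ h₂ x = -detHess (Ham h₁ h₂) x := by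
  have hh₁ := hreg₁.differentiable (by norm_num)
  have hh₂ := hreg₂.differentiable (by norm_num)
  have hh₁' := (hreg₁.of_le (by norm_num)).differentiable_deriv_two
  have hh₂' := (hreg₂.of_le (by norm_num)).differentiable_deriv_two
  intro x
  exact ⟨divR2_acceleration hh₁ hh₂ hh₁' hh₂' hreg₁.differentiable_deriv_deriv
      hreg₂.differentiable_deriv_deriv x, DHFn_eq_neg_detHess hh₁ hh₂ (hh₁' _) (hh₂' _)⟩
end
end

section
/- Under the alignment condition, for every α > 0 and every x ∈ ℝ², div g_α(x) = (α/(l(H(x)) + α)) · n(H(x))² · D_H(x) − H(x) · Λ(x) · Θ_α(H(x)), where Θ_α(h) = α l'(h) n(h)² / (2(l(h)+α)²) − α n(h) n'(h)/(l(h)+α). -/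
/-! Write `c = β_α ν²` as a function of the value `s = H(x)`; then `g_α = c(H) · Dξ ξ`, so
`div g_α = c(H) · div(Dξ ξ) + c'(H) · (∇H · Dξ ξ)`. Each component of `Dξ ξ` is a product of a
function of `x₁` and a function of `x₂`, which makes both terms explicit:
`div(Dξ ξ) = 2 D_H` and `∇H · Dξ ξ = H Λ`, while `c' = −Θ_α`. Since `|H| ≤ 1`, the lower bound on
`l` over `[−1, 1]` keeps the denominators of `c(H)` nonzero. -/

noncomputable section

/-- The inertial drift `g_α = β_α ν² Dξ ξ` under the alignment condition. -/
def driftG (h₁ h₂ l r : ℝ → ℝ) (α : ℝ) : ℝ × ℝ → ℝ × ℝ := fun x =>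
  (α / (2 * (l (Ham h₁ h₂ x) + α)) * (r (Ham h₁ h₂ x) / l (Ham h₁ h₂ x)) ^ 2) •
    fderiv ℝ (xiField h₁ h₂) x (xiField h₁ h₂ x)

/-- The scalar profile `Θ_α` of the divergence decomposition, where `n = r/l`. -/
def ThetaFn (l r : ℝ → ℝ) (α : ℝ) (s : ℝ) : ℝ :=
  α * deriv l s * (r s / l s) ^ 2 / (2 * (l s + α) ^ 2) -
    α * (r s / l s) * deriv (fun h => r h / l h) s / (l s + α)

open ContinuousLinearMap

lemma hasFDerivAt_mul_sep {u w : ℝ → ℝ} {u' w' : ℝ} {x : ℝ × ℝ}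
    (hu : HasDerivAt u u' x.1) (hw : HasDerivAt w w' x.2) :
    HasFDerivAt (fun p : ℝ × ℝ => u p.1 * w p.2)
      ((u' * w x.2) • fst ℝ ℝ ℝ + (u x.1 * w') • snd ℝ ℝ ℝ) x := by
  refine ((hu.comp_hasFDerivAt x hasFDerivAt_fst).mul
    (hw.comp_hasFDerivAt x hasFDerivAt_snd)).congr_fderiv ?_
  ext <;> simp [smul_smul, mul_comm]

lemma divR2_mul_sep {u₁ w₁ u₂ w₂ : ℝ → ℝ} {u₁' w₁' u₂' w₂' : ℝ} {x : ℝ × ℝ}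
    (hu₁ : HasDerivAt u₁ u₁' x.1) (hw₁ : HasDerivAt w₁ w₁' x.2)
    (hu₂ : HasDerivAt u₂ u₂' x.1) (hw₂ : HasDerivAt w₂ w₂' x.2) :
    divR2 (fun p => (u₁ p.1 * w₁ p.2, u₂ p.1 * w₂ p.2)) x = u₁' * w₁ x.2 + u₂ x.1 * w₂' := by
  simp [divR2, ((hasFDerivAt_mul_sep hu₁ hw₁).prodMk (hasFDerivAt_mul_sep hu₂ hw₂)).fderiv]

lemma divR2_smul {f : ℝ × ℝ → ℝ} {V : ℝ × ℝ → ℝ × ℝ} {x : ℝ × ℝ}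
    (hf : DifferentiableAt ℝ f x) (hV : DifferentiableAt ℝ V x) :
    divR2 (fun y => f y • V y) x = f x * divR2 V x + fderiv ℝ f x (V x) := by
  have hVx : V x = (V x).1 • ((1 : ℝ), (0 : ℝ)) + (V x).2 • ((0 : ℝ), (1 : ℝ)) := by
    ext <;> simp
  rw [divR2, divR2, fderiv_fun_smul hf hV]
  conv_rhs => rw [hVx, map_add, map_smul, map_smul]
  simp only [add_apply, smul_apply, smulRight_apply, Prod.fst_add, Prod.smul_fst, smul_eq_mul,
    Prod.snd_add, Prod.smul_snd]
  ring

lemma ContDiff.differentiable_deriv_deriv_s11 {h : ℝ → ℝ} (hh : ContDiff ℝ 3 h) :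
    Differentiable ℝ (deriv (deriv h)) :=
  (ContDiff.deriv' (n := 2) hh).differentiable_deriv_two

/-- `Dξ ξ`, in closed form. -/
def xiAccel (h₁ h₂ : ℝ → ℝ) : ℝ × ℝ → ℝ × ℝ := fun x =>
  (h₁ x.1 * deriv h₁ x.1 * (deriv h₂ x.2 ^ 2 - h₂ x.2 * deriv (deriv h₂) x.2),
    (deriv h₁ x.1 ^ 2 - h₁ x.1 * deriv (deriv h₁) x.1) * (h₂ x.2 * deriv h₂ x.2))

/-- `β_α ν²` as a function of `s = H(x)`. -/
def driftCoeff (l r : ℝ → ℝ) (α s : ℝ) : ℝ :=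
  α / (2 * (l s + α)) * (r s / l s) ^ 2

lemma hasDerivAt_driftCoeff {l r : ℝ → ℝ} {α s : ℝ} (hl : DifferentiableAt ℝ l s)
    (hr : DifferentiableAt ℝ r s) (hls : l s ≠ 0) (hlα : l s + α ≠ 0) :
    HasDerivAt (driftCoeff l r α) (-ThetaFn l r α s) s := by
  have hβ := (hasDerivAt_const s α).div ((hl.hasDerivAt.add_const α).const_mul 2)
    (mul_ne_zero two_ne_zero hlα)
  have hn : DifferentiableAt ℝ (fun t => r t / l t) s := hr.div hl hls
  refine (hβ.mul (hn.hasDerivAt.pow 2)).congr_deriv ?_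
  simp only [ThetaFn, Pi.div_apply, Pi.pow_apply, Nat.reduceSub, pow_one]
  generalize deriv (fun t => r t / l t) s = n'
  field_simp
  ring

section Hamiltonian

variable {h₁ h₂ : ℝ → ℝ}

lemma hasFDerivAt_ham_s11 {x : ℝ × ℝ} (hd₁ : DifferentiableAt ℝ h₁ x.1)
    (hd₂ : DifferentiableAt ℝ h₂ x.2) :
    HasFDerivAt (Ham h₁ h₂)
      ((deriv h₁ x.1 * h₂ x.2) • fst ℝ ℝ ℝ + (h₁ x.1 * deriv h₂ x.2) • snd ℝ ℝ ℝ) x :=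
  hasFDerivAt_mul_sep hd₁.hasDerivAt hd₂.hasDerivAt

lemma fderiv_xiField_apply_xiField (hd₁ : Differentiable ℝ h₁) (hd₂ : Differentiable ℝ h₂)
    (hd₁' : Differentiable ℝ (deriv h₁)) (hd₂' : Differentiable ℝ (deriv h₂)) (x : ℝ × ℝ) :
    fderiv ℝ (xiField h₁ h₂) x (xiField h₁ h₂ x) = xiAccel h₁ h₂ x := by
  have hξ : HasFDerivAt (xiField h₁ h₂) _ x :=
    (hasFDerivAt_mul_sep (hd₁ x.1).hasDerivAt (hd₂' x.2).hasDerivAt).neg.prodMk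
      (hasFDerivAt_mul_sep (hd₁' x.1).hasDerivAt (hd₂ x.2).hasDerivAt)
  rw [hξ.fderiv]
  ext <;> simp only [xiField, xiAccel, ContinuousLinearMap.prod_apply, add_apply, neg_apply,
    smul_apply, coe_fst', coe_snd', smul_eq_mul] <;> ring

lemma divR2_xiAccel (hd₁ : Differentiable ℝ h₁) (hd₂ : Differentiable ℝ h₂)
    (hd₁' : Differentiable ℝ (deriv h₁)) (hd₂' : Differentiable ℝ (deriv h₂))
    (hd₁'' : Differentiable ℝ (deriv (deriv h₁))) (hd₂'' : Differentiable ℝ (deriv (deriv h₂)))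
    (x : ℝ × ℝ) :
    divR2 (xiAccel h₁ h₂) x = 2 * DHFn h₁ h₂ x := by
  have hu₁ := (hd₁ x.1).hasDerivAt.mul (hd₁' x.1).hasDerivAt
  have hw₁ := ((hd₂' x.2).hasDerivAt.pow 2).sub ((hd₂ x.2).hasDerivAt.mul (hd₂'' x.2).hasDerivAt)
  have hu₂ := ((hd₁' x.1).hasDerivAt.pow 2).sub ((hd₁ x.1).hasDerivAt.mul (hd₁'' x.1).hasDerivAt)
  have hw₂ := (hd₂ x.2).hasDerivAt.mul (hd₂' x.2).hasDerivAt
  refine (divR2_mul_sep hu₁ hw₁ hu₂ hw₂).trans ?_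
  simp only [Pi.sub_apply, Pi.pow_apply, Pi.mul_apply, DHFn]
  ring

lemma fderiv_ham_xiAccel (hd₁ : Differentiable ℝ h₁) (hd₂ : Differentiable ℝ h₂) (x : ℝ × ℝ) :
    fderiv ℝ (Ham h₁ h₂) x (xiAccel h₁ h₂ x) = Ham h₁ h₂ x * LambdaFn h₁ h₂ x := by
  simp only [(hasFDerivAt_ham_s11 (hd₁ x.1) (hd₂ x.2)).fderiv, xiAccel, add_apply, smul_apply,
    coe_fst', coe_snd', smul_eq_mul, Ham, LambdaFn]
  ring

lemma driftG_eq_smul (hd₁ : Differentiable ℝ h₁) (hd₂ : Differentiable ℝ h₂)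
    (hd₁' : Differentiable ℝ (deriv h₁)) (hd₂' : Differentiable ℝ (deriv h₂)) (l r : ℝ → ℝ)
    (α : ℝ) :
    driftG h₁ h₂ l r α = fun x => driftCoeff l r α (Ham h₁ h₂ x) • xiAccel h₁ h₂ x := by
  ext1 x
  rw [driftG, fderiv_xiField_apply_xiField hd₁ hd₂ hd₁' hd₂', driftCoeff]

end Hamiltonian

theorem div_drift_decomposition_general
    (l₀ : ℝ) (hl₀ : 0 < l₀)
    (h₁ h₂ : ℝ → ℝ)
    (hreg₁ : ContDiff ℝ 3 h₁) (hreg₂ : ContDiff ℝ 3 h₂)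
    (hbd₁ : ∀ x : ℝ, |h₁ x| ≤ 1) (hbd₂ : ∀ x : ℝ, |h₂ x| ≤ 1)
    (l r : ℝ → ℝ) (hlreg : ContDiff ℝ 2 l) (hrreg : ContDiff ℝ 2 r)
    (hlb : ∀ s ∈ Set.Icc (-1 : ℝ) 1, l₀ ≤ l s) :
    ∀ α : ℝ, 0 < α → ∀ x : ℝ × ℝ,
      divR2 (driftG h₁ h₂ l r α) x =
        α / (l (Ham h₁ h₂ x) + α) * (r (Ham h₁ h₂ x) / l (Ham h₁ h₂ x)) ^ 2 *
            DHFn h₁ h₂ x -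
          Ham h₁ h₂ x * LambdaFn h₁ h₂ x * ThetaFn l r α (Ham h₁ h₂ x) := by
  intro α hα x
  have hd₁ := hreg₁.differentiable (by norm_num)
  have hd₂ := hreg₂.differentiable (by norm_num)
  have hd₁' := (hreg₁.of_le (by norm_num)).differentiable_deriv_two
  have hd₂' := (hreg₂.of_le (by norm_num)).differentiable_deriv_two
  have hH : Ham h₁ h₂ x ∈ Set.Icc (-1 : ℝ) 1 := by
    rw [Set.mem_Icc, ← abs_le, Ham, abs_mul]
    exact mul_le_one₀ (hbd₁ x.1) (abs_nonneg _) (hbd₂ x.2)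
  have hl : 0 < l (Ham h₁ h₂ x) := hl₀.trans_le (hlb _ hH)
  have hc : HasFDerivAt (fun y => driftCoeff l r α (Ham h₁ h₂ y))
      (-ThetaFn l r α (Ham h₁ h₂ x) • fderiv ℝ (Ham h₁ h₂) x) x :=
    (hasDerivAt_driftCoeff (hlreg.differentiable (by norm_num) _)
      (hrreg.differentiable (by norm_num) _) hl.ne' (by positivity)).comp_hasFDerivAt x
      (hasFDerivAt_ham_s11 (hd₁ x.1) (hd₂ x.2)).differentiableAt.hasFDerivAt
  rw [driftG_eq_smul hd₁ hd₂ hd₁' hd₂',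
    divR2_smul hc.differentiableAt (by unfold xiAccel; fun_prop), hc.fderiv,
    divR2_xiAccel hd₁ hd₂ hd₁' hd₂' hreg₁.differentiable_deriv_deriv_s11
      hreg₂.differentiable_deriv_deriv_s11,
    smul_apply, fderiv_ham_xiAccel hd₁ hd₂, driftCoeff]
  field_simp
  ring

/-- Structure of `div g_α` under the alignment condition:
`div g_α = (α/(l∘H + α)) n(H)² D_H − H·Λ·Θ_α(H)`. -/
theorem div_drift_decomposition
    (L l₀ r₀ : ℝ) (hL : 0 < L) (hl₀ : 0 < l₀) (hr₀ : 0 < r₀)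
    (h₁ h₂ : ℝ → ℝ)
    (hreg₁ : ContDiff ℝ 3 h₁) (hreg₂ : ContDiff ℝ 3 h₂)
    (hper₁ : Function.Periodic h₁ L) (hper₂ : Function.Periodic h₂ L)
    (hbd₁ : ∀ x : ℝ, |h₁ x| ≤ 1) (hbd₂ : ∀ x : ℝ, |h₂ x| ≤ 1)
    (hmax₁ : ∃ x : ℝ, |h₁ x| = 1) (hmax₂ : ∃ x : ℝ, |h₂ x| = 1)
    (l r : ℝ → ℝ) (hlreg : ContDiff ℝ 2 l) (hrreg : ContDiff ℝ 2 r)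
    (hlb : ∀ s ∈ Set.Icc (-1 : ℝ) 1, l₀ ≤ l s)
    (hrb : ∀ s ∈ Set.Icc (-1 : ℝ) 1, r₀ ≤ (r s) ^ 2) :
    ∀ α : ℝ, 0 < α → ∀ x : ℝ × ℝ,
      divR2 (driftG h₁ h₂ l r α) x =
        α / (l (Ham h₁ h₂ x) + α) * (r (Ham h₁ h₂ x) / l (Ham h₁ h₂ x)) ^ 2 *
            DHFn h₁ h₂ x -
          Ham h₁ h₂ x * LambdaFn h₁ h₂ x * ThetaFn l r α (Ham h₁ h₂ x) :=
  div_drift_decomposition_general l₀ hl₀ h₁ h₂ hreg₁ hreg₂ hbd₁ hbd₂ l r hlreg hrreg hlb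
end
end

section
/- Let h₁, h₂ satisfy (H1), (H2), (H3), and let q = (q₁, p₂) with q₁ ∈ Z₁ and p₂ ∈ M₂ be a midpoint. Then there exist η₀ > 0, an open neighborhood V of p₂ in ℝ, and a constant c > 0, depending only on h₁ and h₂, such that for every x = (x₁, x₂) ∈ ℝ² with |H(x)| ≤ η₀ and x₂ ∈ V, one has |h₁'(x₁)| · |h₂(x₂)| ≥ c. The analogous statement holds at midpoints (p₁, q₂) with p₁ ∈ M₁ and q₂ ∈ Z₂, with the roles of the coordinates exchanged. -/
/-- The derivative of a periodic function is periodic. -/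
lemma periodic_deriv' (h : ℝ → ℝ) (L : ℝ) (hper : Function.Periodic h L) :
    Function.Periodic (deriv h) L := by
  intro x
  have : deriv (fun y => h (y + L)) x = deriv h x := by
    congr 1
    funext y
    exact hper y
  rw [← this, deriv_comp_add_const]

/-- Global lower bound: `|h| + |h'| ≥ ε > 0` for a periodic `C¹` function with
only simple zeros. -/
lemma key_lower_bound (h : ℝ → ℝ) (L : ℝ) (hL : 0 < L)
    (hreg : ContDiff ℝ 3 h) (hH1 : CondH1 h) (hper : Function.Periodic h L) :
    ∃ ε : ℝ, 0 < ε ∧ ∀ x : ℝ, ε ≤ |h x| + |deriv h x| := by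
  set f : ℝ → ℝ := fun x => |h x| + |deriv h x| with hf
  have hcont : Continuous f :=
    (hreg.continuous.abs).add ((hreg.continuous_deriv (by norm_num)).abs)
  have hfpos : ∀ x, 0 < f x := by
    intro x
    rcases eq_or_ne (h x) 0 with hx | hx
    · have := hH1 x hx
      have : 0 < |deriv h x| := abs_pos.mpr this
      simp only [hf, hx, abs_zero, zero_add]
      exact this
    · have h1 : 0 < |h x| := abs_pos.mpr hx
      have h2 : 0 ≤ |deriv h x| := abs_nonneg _
      simp only [hf]; linarith
  obtain ⟨x₀, hx₀mem, hx₀min⟩ :=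
    (isCompact_Icc (a := (0:ℝ)) (b := L)).exists_isMinOn
      ⟨0, by constructor <;> [rfl; exact le_of_lt hL]⟩ hcont.continuousOn
  refine ⟨f x₀, hfpos x₀, fun x => ?_⟩
  have hfper : Function.Periodic f L := by
    intro y
    simp only [hf, hper y, periodic_deriv' h L hper y]
  obtain ⟨y, hy, hxy⟩ := hfper.exists_mem_Ico₀ hL x
  show f x₀ ≤ f x
  rw [hxy]
  exact hx₀min ⟨hy.1, le_of_lt (lt_of_lt_of_le hy.2 le_rfl)⟩

/-- Generic one-sided statement. -/
lemma aux_side (f g : ℝ → ℝ) (ε : ℝ) (hε : 0 < ε)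
    (hkey : ∀ x : ℝ, ε ≤ |f x| + |deriv f x|)
    (hgc : Continuous g) (p : ℝ) (hgp : g p ≠ 0) :
    ∃ η₀ : ℝ, 0 < η₀ ∧ ∃ V : Set ℝ, IsOpen V ∧ p ∈ V ∧ ∃ c : ℝ, 0 < c ∧
      ∀ x₁ x₂ : ℝ, |f x₁ * g x₂| ≤ η₀ → x₂ ∈ V →
        c ≤ |deriv f x₁| * |g x₂| := by
  set m : ℝ := |g p| with hm
  have hm0 : 0 < m := abs_pos.mpr hgp
  refine ⟨(ε / 2) * (m / 2), by positivity,
    {y | m / 2 < |g y|}, ?_, ?_, (ε / 2) * (m / 2), by positivity, ?_⟩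
  · exact isOpen_lt continuous_const hgc.abs
  · simp only [Set.mem_setOf_eq]; linarith
  · intro x₁ x₂ hη hV
    simp only [Set.mem_setOf_eq] at hV
    have hg2 : (0:ℝ) < |g x₂| := lt_trans (by positivity) hV
    have habs : |f x₁| * |g x₂| ≤ (ε / 2) * (m / 2) := by
      rw [← abs_mul]; exact hη
    have hf1 : |f x₁| ≤ ε / 2 := by
      by_contra hcon
      push_neg at hcon
      have : (ε / 2) * (m / 2) < |f x₁| * |g x₂| := by
        nlinarith [abs_nonneg (f x₁), abs_nonneg (g x₂)]
      linarith
    have hd : ε / 2 ≤ |deriv f x₁| := by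
      have := hkey x₁; linarith
    calc (ε / 2) * (m / 2) ≤ |deriv f x₁| * (m / 2) := by nlinarith
      _ ≤ |deriv f x₁| * |g x₂| := by
          apply mul_le_mul_of_nonneg_left (le_of_lt hV) (abs_nonneg _)

/-- Non-degeneracy near a midpoint: near a midpoint `q = (q₁, p₂) ∈ Z₁ × M₂`
and within the thin set `{|H| ≤ η₀}`, the product `|h₁'(x₁)|·|h₂(x₂)|` is
bounded below by a positive constant; analogously at midpoints of `M₁ × Z₂`. -/
theorem nondegeneracy_near_midpoints
    (L : ℝ) (hL : 0 < L)
    (h₁ h₂ : ℝ → ℝ)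
    (hreg₁ : ContDiff ℝ 3 h₁) (hreg₂ : ContDiff ℝ 3 h₂)
    (hper₁ : Function.Periodic h₁ L) (hper₂ : Function.Periodic h₂ L)
    (hH1₁ : CondH1 h₁) (hH1₂ : CondH1 h₂)
    (hH2₁ : CondH2 h₁) (hH2₂ : CondH2 h₂)
    (hH3₁ : CondH3 h₁) (hH3₂ : CondH3 h₂) :
    -- midpoints of type `Z₁ × M₂`
    (∀ q₁ p₂ : ℝ, h₁ q₁ = 0 → deriv h₂ p₂ = 0 →
      ∃ η₀ : ℝ, 0 < η₀ ∧ ∃ V : Set ℝ, IsOpen V ∧ p₂ ∈ V ∧ ∃ c : ℝ, 0 < c ∧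
        ∀ x : ℝ × ℝ, |Ham h₁ h₂ x| ≤ η₀ → x.2 ∈ V →
          c ≤ |deriv h₁ x.1| * |h₂ x.2|) ∧
    -- midpoints of type `M₁ × Z₂`
    (∀ p₁ q₂ : ℝ, deriv h₁ p₁ = 0 → h₂ q₂ = 0 →
      ∃ η₀ : ℝ, 0 < η₀ ∧ ∃ V : Set ℝ, IsOpen V ∧ p₁ ∈ V ∧ ∃ c : ℝ, 0 < c ∧
        ∀ x : ℝ × ℝ, |Ham h₁ h₂ x| ≤ η₀ → x.1 ∈ V →
          c ≤ |h₁ x.1| * |deriv h₂ x.2|) := by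
  obtain ⟨ε₁, hε₁, hkey₁⟩ := key_lower_bound h₁ L hL hreg₁ hH1₁ hper₁
  obtain ⟨ε₂, hε₂, hkey₂⟩ := key_lower_bound h₂ L hL hreg₂ hH1₂ hper₂
  constructor
  · intro q₁ p₂ _ hp₂
    have hgp : h₂ p₂ ≠ 0 := fun h => hH1₂ p₂ h hp₂
    obtain ⟨η₀, hη₀, V, hVopen, hVmem, c, hc, hmain⟩ :=
      aux_side h₁ h₂ ε₁ hε₁ hkey₁ hreg₂.continuous p₂ hgp
    exact ⟨η₀, hη₀, V, hVopen, hVmem, c, hc, fun x hx hxV =>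
      hmain x.1 x.2 hx hxV⟩
  · intro p₁ q₂ hp₁ _
    have hgp : h₁ p₁ ≠ 0 := fun h => hH1₁ p₁ h hp₁
    obtain ⟨η₀, hη₀, V, hVopen, hVmem, c, hc, hmain⟩ :=
      aux_side h₂ h₁ ε₂ hε₂ hkey₂ hreg₁.continuous p₁ hgp
    refine ⟨η₀, hη₀, V, hVopen, hVmem, c, hc, fun x hx hxV => ?_⟩
    have : |h₂ x.2 * h₁ x.1| ≤ η₀ := by
      rw [mul_comm]; exact hx
    have := hmain x.2 x.1 this hxV
    linarith [this, mul_comm |deriv h₂ x.2| |h₁ x.1|]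
end

section
/- Let t ≥ log 2 ≥ 0 and let u : [0, t] → ℝ be a measurable function, integrable on [0, t], with u(s) ≤ 1 for almost every s. Then ∫₀ᵗ exp(∫₀ˢ u(r) dr) ds ≥ exp(∫₀ᵗ u(r) dr) · (1 − e^{−t}); in particular, for t ≥ log 2, exp(−∫₀ᵗ u(r) dr) ≥ (1/2) · (∫₀ᵗ exp(∫₀ˢ u(r) dr) ds)^{−1}. -/
open MeasureTheory

/-- An elementary exponential integral estimate: if `u ≤ 1` a.e. on `[0,t]`,
then `∫₀ᵗ exp(∫₀ˢ u) ds ≥ exp(∫₀ᵗ u)·(1 − e^{−t})`; in particular, for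
`t ≥ log 2`, `exp(−∫₀ᵗ u) ≥ (1/2)(∫₀ᵗ exp(∫₀ˢ u) ds)⁻¹`. -/
theorem exp_integral_lower_bound
    (t : ℝ) (ht : Real.log 2 ≤ t)
    (u : ℝ → ℝ) (hmeas : Measurable u)
    (hint : IntegrableOn u (Set.Icc 0 t))
    (hle : ∀ᵐ s ∂(volume.restrict (Set.Icc (0 : ℝ) t)), u s ≤ 1) :
    Real.exp (∫ r in (0 : ℝ)..t, u r) * (1 - Real.exp (-t)) ≤
      (∫ s in (0 : ℝ)..t, Real.exp (∫ r in (0 : ℝ)..s, u r)) ∧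
    (1 / 2) * (∫ s in (0 : ℝ)..t, Real.exp (∫ r in (0 : ℝ)..s, u r))⁻¹ ≤
      Real.exp (-∫ r in (0 : ℝ)..t, u r) := by
  have ht0 : (0:ℝ) ≤ t := le_trans (Real.log_nonneg one_le_two) ht
  have huIcc : Set.uIcc (0:ℝ) t = Set.Icc 0 t := Set.uIcc_of_le ht0
  have hii : ∀ a b : ℝ, a ∈ Set.Icc (0:ℝ) t → b ∈ Set.Icc (0:ℝ) t →
      IntervalIntegrable u volume a b := by
    intro a b ha hb
    apply (hint.mono_set _).intervalIntegrable
    rw [← huIcc]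
    exact Set.uIcc_subset_uIcc (huIcc ▸ ha) (huIcc ▸ hb)
  set I : ℝ := ∫ r in (0 : ℝ)..t, u r with hI
  have key : ∀ s ∈ Set.Icc (0:ℝ) t,
      Real.exp I * Real.exp (s - t) ≤ Real.exp (∫ r in (0:ℝ)..s, u r) := by
    intro s hs
    have hsplit : (∫ r in (0:ℝ)..s, u r) + (∫ r in s..t, u r) = I :=
      intervalIntegral.integral_add_adjacent_intervals
        (hii 0 s ⟨le_rfl, ht0⟩ hs) (hii s t hs ⟨ht0, le_rfl⟩)
    have hst : (∫ r in s..t, u r) ≤ t - s := by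
      have h1 : (∫ r in s..t, (1:ℝ)) = t - s := by simp
      rw [← h1]
      apply intervalIntegral.integral_mono_ae_restrict hs.2 (hii s t hs ⟨ht0, le_rfl⟩)
        intervalIntegrable_const
      exact ae_restrict_of_ae_restrict_of_subset (Set.Icc_subset_Icc hs.1 le_rfl) hle
    rw [← Real.exp_add]
    exact Real.exp_le_exp.2 (by linarith)
  have hcont : ContinuousOn (fun s => Real.exp (∫ r in (0:ℝ)..s, u r)) (Set.Icc 0 t) := by
    apply Real.continuous_exp.comp_continuousOn
    have := intervalIntegral.continuousOn_primitive_interval (a := 0) (b := t)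
      (f := u) (μ := volume) (by rwa [huIcc])
    rwa [huIcc] at this
  have hintg2 : IntervalIntegrable (fun s => Real.exp (∫ r in (0:ℝ)..s, u r)) volume 0 t :=
    (huIcc ▸ hcont).intervalIntegrable
  have hintg1 : IntervalIntegrable (fun s => Real.exp I * Real.exp (s - t)) volume 0 t :=
    (Continuous.intervalIntegrable (by continuity) 0 t)
  have h1 : Real.exp I * (1 - Real.exp (-t)) ≤
      ∫ s in (0:ℝ)..t, Real.exp (∫ r in (0:ℝ)..s, u r) := by
    have hcalc : (∫ s in (0:ℝ)..t, Real.exp I * Real.exp (s - t))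
        = Real.exp I * (1 - Real.exp (-t)) := by
      rw [intervalIntegral.integral_const_mul]
      congr 1
      have h := intervalIntegral.integral_comp_sub_right (a := (0:ℝ)) (b := t)
        (fun x => Real.exp x) t
      rw [h]
      rw [integral_exp]
      simp
    rw [← hcalc]
    exact intervalIntegral.integral_mono_on ht0 hintg1 hintg2 key
  refine ⟨h1, ?_⟩
  set J : ℝ := ∫ s in (0:ℝ)..t, Real.exp (∫ r in (0:ℝ)..s, u r) with hJdef
  have hexp_half : Real.exp (-t) ≤ 1/2 := by
    have h2 : (1:ℝ)/2 = Real.exp (-Real.log 2) := by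
      rw [Real.exp_neg, Real.exp_log two_pos]; norm_num
    rw [h2]
    exact Real.exp_le_exp.2 (by linarith)
  have hJ : Real.exp I * (1/2) ≤ J := by
    refine le_trans ?_ h1
    nlinarith [Real.exp_pos I]
  have hJpos : 0 < J := lt_of_lt_of_le (by positivity) hJ
  rw [Real.exp_neg]
  calc (1/2) * J⁻¹ ≤ (1/2) * (Real.exp I * (1/2))⁻¹ := by
        gcongr
      _ = (Real.exp I)⁻¹ := by
        rw [mul_inv]
        field_simp
end
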